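/- arXiv:1910.08733 — 8 statements merged into one kernel-verified Lean document; each statement's English description precedes it below -/
import Mathlib

section
/- (Mirsky's theorem) In a finite partially ordered set, the maximum size of a chain equals the minimum number of antichains into which the poset can be partitioned. -/
section Mirsky

variable {α : Type*} [Fintype α] [PartialOrder α]

private def heightSet (x : α) : Set ℕ :=
  {n | ∃ s : Finset α, IsChain (· ≤ ·) (s : Set α) ∧ (∀ y ∈ s, y ≤ x) ∧ s.card = n}

private lemma heightSet_bdd (x : α) : BddAbove (heightSet x) := by
  refine ⟨Fintype.card α, ?_⟩
  rintro n ⟨s, _, _, rfl⟩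
  exact s.card_le_univ.trans_eq Finset.card_univ

private lemma one_mem_heightSet (x : α) : 1 ∈ heightSet x := by
  refine ⟨{x}, ?_, ?_, Finset.card_singleton x⟩
  · simp [Set.Subsingleton.isChain, Set.subsingleton_singleton]
  · simp

noncomputable def fheight (x : α) : ℕ := sSup (heightSet x)

private lemma fheight_mem (x : α) : fheight x ∈ heightSet x :=
  Nat.sSup_mem ⟨1, one_mem_heightSet x⟩ (heightSet_bdd x)

private lemma one_le_fheight (x : α) : 1 ≤ fheight x :=
  le_csSup (heightSet_bdd x) (one_mem_heightSet x)

private lemma fheight_lt [DecidableEq α] {x y : α} (hxy : x < y) : fheight x < fheight y := by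
  obtain ⟨s, hs, hle, hcard⟩ := fheight_mem x
  have hy : y ∉ s := fun h => absurd (hle y h) hxy.not_ge
  have h1 : fheight x + 1 ∈ heightSet y := by
    refine ⟨insert y s, ?_, ?_, ?_⟩
    · rw [Finset.coe_insert]
      exact hs.insert (fun z hz _ => Or.inr ((hle z hz).trans hxy.le))
    · intro z hz
      rcases Finset.mem_insert.1 hz with rfl | hz
      · exact le_rfl
      · exact (hle z hz).trans hxy.le
    · rw [Finset.card_insert_of_notMem hy, hcard]
  exact Nat.lt_of_succ_le (le_csSup (heightSet_bdd y) h1)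

end Mirsky

/-- Mirsky's theorem: in a finite poset the maximum size of a chain equals the
minimum number of antichains into which the poset can be partitioned. -/
theorem stmt_3 (α : Type*) [Fintype α] [PartialOrder α] :
    sSup {n | ∃ s : Finset α, IsChain (· ≤ ·) (s : Set α) ∧ s.card = n} =
    sInf {n | ∃ A : Fin n → Set α, (∀ i, IsAntichain (· ≤ ·) (A i)) ∧
      (∀ x, ∃ i, x ∈ A i) ∧ Pairwise (Function.onFun Disjoint A)} := by
  classical
  set C : Set ℕ := {n | ∃ s : Finset α, IsChain (· ≤ ·) (s : Set α) ∧ s.card = n} with hC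
  set P : Set ℕ := {n | ∃ A : Fin n → Set α, (∀ i, IsAntichain (· ≤ ·) (A i)) ∧
      (∀ x, ∃ i, x ∈ A i) ∧ Pairwise (Function.onFun Disjoint A)} with hP
  have hCbdd : BddAbove C := by
    refine ⟨Fintype.card α, ?_⟩
    rintro n ⟨s, _, rfl⟩
    exact s.card_le_univ.trans_eq Finset.card_univ
  have hC0 : (0 : ℕ) ∈ C := ⟨∅, by simp [Set.Subsingleton.isChain], Finset.card_empty⟩
  set M := sSup C with hM
  -- heights are at most M
  have hfle : ∀ x : α, fheight x ≤ M := by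
    intro x
    obtain ⟨s, hs, _, hcard⟩ := fheight_mem x
    exact le_csSup hCbdd ⟨s, hs, hcard⟩
  -- M ∈ P via height antichains
  have hMP : M ∈ P := by
    refine ⟨fun i => {x | fheight x = (i : ℕ) + 1}, ?_, ?_, ?_⟩
    · intro i x hx y hy hne hxy
      simp only [Set.mem_setOf_eq] at hx hy
      have hlt : x < y := lt_of_le_of_ne hxy hne
      have := fheight_lt hlt
      omega
    · intro x
      have h1 := one_le_fheight x
      have h2 := hfle x
      exact ⟨⟨fheight x - 1, by omega⟩, by simp; omega⟩
    · intro i j hij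
      rw [Function.onFun, Set.disjoint_left]
      intro x hx hx'
      simp only [Set.mem_setOf_eq] at hx hx'
      exact hij (Fin.ext (by omega))
  have hPne : P.Nonempty := ⟨M, hMP⟩
  apply le_antisymm
  · -- M ≤ sInf P: every chain card ≤ every element of P
    have hmem := Nat.sInf_mem hPne
    obtain ⟨A, hanti, hcov, hdisj⟩ := hmem
    apply csSup_le ⟨0, hC0⟩
    rintro n ⟨s, hs, rfl⟩
    classical
    choose g hg using hcov
    have hinj : Set.InjOn g s := by
      intro x hx y hy hgxy
      by_contra hne
      rcases hs hx hy hne with h | h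
      · exact hanti (g x) (hg x) (hgxy ▸ hg y) hne h
      · exact hanti (g x) (hgxy ▸ hg y) (hg x) (Ne.symm hne) h
    calc s.card ≤ (Finset.univ : Finset (Fin (sInf P))).card :=
          Finset.card_le_card_of_injOn g (fun _ _ => Finset.mem_univ _) hinj
      _ = sInf P := by simp
  · exact Nat.sInf_le hMP
end

section
/- Let P = [a] × [2b] with partial order (x,y) ⪯ (z,t) iff (x,y)=(z,t), or (x<z and y<t), or (y ≤ b and t ≥ b+1 and y < t-b). Then any antichain of P has at most a+b elements. -/
/-- A step moves one unit down `(1,0)` or one unit left `(0,-1)`. -/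
def Step (p q : ℤ × ℤ) : Prop := q = p + (1, 0) ∨ q = p + (0, -1)

/-- `l` is a path starting at `p` and ending at `q`, each consecutive
difference being `(1,0)` or `(0,-1)`. -/
def IsPathFromTo (l : List (ℤ × ℤ)) (p q : ℤ × ℤ) : Prop :=
  l.Chain' Step ∧ l.head? = some p ∧ l.getLast? = some q

/-- Membership in the poset `P = [a] × [2b]`, viewed inside `ℤ × ℤ`. -/
def memP (a b : ℕ) (p : ℤ × ℤ) : Prop :=
  1 ≤ p.1 ∧ p.1 ≤ (a : ℤ) ∧ 1 ≤ p.2 ∧ p.2 ≤ 2 * (b : ℤ)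

/-- The partial order on `P = [a] × [2b]`:
`(x,y) ⪯ (z,t)` iff `(x,y) = (z,t)`, or `x < z` and `y < t`,
or `y ≤ b`, `t ≥ b+1` and `y < t - b`. -/
def ple (b : ℕ) (p q : ℤ × ℤ) : Prop :=
  p = q ∨ (p.1 < q.1 ∧ p.2 < q.2) ∨
    (p.2 ≤ (b : ℤ) ∧ (b : ℤ) + 1 ≤ q.2 ∧ p.2 < q.2 - (b : ℤ))

/-!
Two distinct incomparable points never satisfy `x < z ∧ y < t`, so on an antichain the
diagonal index `x - y` is injective. Let `c` be the least height `y ≤ b` of a point of the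
antichain (or `c = b` if there is none). Points of height `y ≤ b` have `x - y ∈ [1 - b, a - c]`;
a point of height `t > b` is incomparable with every lower point, which forces `t - b ≤ c`, so
it has `x - t ∈ [1 - c - b, a - b - 1]`. All diagonal indices therefore lie in the window
`[1 - c - b, a - c]` of `a + b` integers.
-/

open Finset

variable {a b : ℕ} {S : Finset (ℤ × ℤ)}

lemma IsAntichain.injOn_fst_sub_snd (hA : IsAntichain (ple b) (S : Set (ℤ × ℤ))) :
    Set.InjOn (fun p : ℤ × ℤ => p.1 - p.2) (S : Set (ℤ × ℤ)) := by
  intro p hp q hq hpq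
  simp only at hpq
  by_contra hne
  rcases lt_trichotomy p.1 q.1 with h | h | h
  · exact hA hp hq hne (Or.inr (Or.inl ⟨h, by omega⟩))
  · exact hne (Prod.ext h (by omega))
  · exact hA hq hp (Ne.symm hne) (Or.inr (Or.inl ⟨h, by omega⟩))

lemma IsAntichain.snd_sub_le_of_snd_le (hA : IsAntichain (ple b) (S : Set (ℤ × ℤ)))
    {p q : ℤ × ℤ} (hp : p ∈ S) (hq : q ∈ S) (hp₂ : p.2 ≤ b) (hq₂ : (b : ℤ) < q.2) :
    q.2 - b ≤ p.2 := by
  have hne : p ≠ q := by rintro rfl; omega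
  by_contra! h
  exact hA hp hq hne (Or.inr (Or.inr ⟨hp₂, by omega, h⟩))

lemma IsAntichain.exists_lower_height (hA : IsAntichain (ple b) (S : Set (ℤ × ℤ)))
    (hS : ∀ p ∈ S, 0 ≤ p.2 ∧ p.2 ≤ 2 * (b : ℤ)) :
    ∃ c : ℤ, 0 ≤ c ∧ c ≤ b ∧
      ∀ p ∈ S, (p.2 ≤ b → c ≤ p.2) ∧ ((b : ℤ) < p.2 → p.2 - b ≤ c) := by
  set heights := insert (b : ℤ) ((S.filter (·.2 ≤ (b : ℤ))).image Prod.snd)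
  have hne : heights.Nonempty := insert_nonempty _ _
  refine ⟨heights.min' hne, ?_, min'_le _ _ (mem_insert_self _ _),
    fun p hp => ⟨fun hp₂ => ?_, fun hp₂ => ?_⟩⟩
  · refine le_min' _ _ _ fun y hy => ?_
    rcases mem_insert.1 hy with rfl | hy
    · positivity
    · obtain ⟨q, hq, rfl⟩ := mem_image.1 hy
      exact (hS q (mem_filter.1 hq).1).1
  · exact min'_le _ _ (mem_insert_of_mem (mem_image_of_mem _ (mem_filter.2 ⟨hp, hp₂⟩)))
  · refine le_min' _ _ _ fun y hy => ?_
    rcases mem_insert.1 hy with rfl | hy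
    · linarith [(hS p hp).2]
    · obtain ⟨q, hq, rfl⟩ := mem_image.1 hy
      rw [mem_filter] at hq
      exact hA.snd_sub_le_of_snd_le hq.1 hp hq.2 hp₂

lemma IsAntichain.exists_fst_sub_snd_mem_Icc (hA : IsAntichain (ple b) (S : Set (ℤ × ℤ)))
    (hS : ∀ p ∈ S, memP a b p) :
    ∃ c : ℤ, ∀ p ∈ S, p.1 - p.2 ∈ Icc (1 - c - b) (a - c) := by
  obtain ⟨c, hc₀, hcb, hc⟩ := hA.exists_lower_height fun p hp => by
    obtain ⟨-, -, h₁, h₂⟩ := hS p hp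
    omega
  refine ⟨c, fun p hp => mem_Icc.2 ?_⟩
  obtain ⟨hx₁, hxa, -, -⟩ := hS p hp
  obtain ⟨hlow, hup⟩ := hc p hp
  by_cases hp₂ : p.2 ≤ b
  · have := hlow hp₂
    omega
  · have := hup (by omega)
    omega

theorem stmt_5_general (a b : ℕ) (S : Finset (ℤ × ℤ))
    (hS : ∀ p ∈ S, memP a b p) (hA : IsAntichain (ple b) (S : Set (ℤ × ℤ))) :
    S.card ≤ a + b := by
  obtain ⟨c, hc⟩ := hA.exists_fst_sub_snd_mem_Icc hS
  calc S.card ≤ (Icc (1 - c - b) (a - c)).card :=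
        card_le_card_of_injOn _ hc hA.injOn_fst_sub_snd
    _ = a + b := by rw [Int.card_Icc]; omega

theorem stmt_5 (a b : ℕ) (ha : 2 ≤ a) (hab : a ≤ b) (S : Finset (ℤ × ℤ))
    (hS : ∀ p ∈ S, memP a b p) (hA : IsAntichain (ple b) (S : Set (ℤ × ℤ))) :
    S.card ≤ a + b :=
  stmt_5_general a b S hS hA
end

section
/- Let P = [a] × [2b] with partial order (x,y) ⪯ (z,t) iff (x,y)=(z,t), or (x<z and y<t), or (y ≤ b and t ≥ b+1 and y < t-b). Then the maximal antichains of P are exactly the paths starting in (1, b+h) and ending in (a, h) for some 1 ≤ h ≤ b, where a path is a set of points obtainable by successive steps (1,0) or (0,-1). -/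
/-!
In an antichain no point lies strictly below-left of another, and by the third clause of the
order the levels of its points span at most `b`; so an antichain is a weakly decreasing
staircase with at most one point on each diagonal `x - y = const`. If it is maximal and `m` is
its lowest level, maximality puts `(1, m + b)` and `(a, m)` into it and, at every point before
the diagonal of `(a, m)`, its right or lower neighbour; following these steps from `(1, m + b)`
exhausts it. Conversely, a path from `(1, b + h)` to `(a, h)` is such a staircase, and every
other point of `P` lies above it, below it, or on one of its diagonals, hence is comparable with
its last point, its first point, or its point on that diagonal.
-/

lemma step_iff {p q : ℤ × ℤ} :
    Step p q ↔ q.1 = p.1 + 1 ∧ q.2 = p.2 ∨ q.1 = p.1 ∧ q.2 = p.2 - 1 := by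
  simp only [Step, Prod.ext_iff, Prod.fst_add, Prod.snd_add]
  omega

lemma isPathFromTo_iff {l : List (ℤ × ℤ)} {p q : ℤ × ℤ} :
    IsPathFromTo l p q ↔ l.IsChain Step ∧ l.head? = some p ∧ l.getLast? = some q :=
  Iff.rfl

lemma isPathFromTo_cons {x p q : ℤ × ℤ} {l : List (ℤ × ℤ)} :
    IsPathFromTo (x :: l) p q ↔
      x = p ∧ (l = [] ∧ x = q ∨ ∃ t, Step x t ∧ IsPathFromTo l t q) := by
  cases l with
  | nil => simp [isPathFromTo_iff]
  | cons t l =>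
    simp only [isPathFromTo_iff, List.isChain_cons_cons, List.head?_cons, Option.some.injEq,
      List.getLast?_cons_cons, reduceCtorEq, false_and, false_or]
    grind

namespace IsPathFromTo

variable {l : List (ℤ × ℤ)} {p q : ℤ × ℤ}

lemma cons {t : ℤ × ℤ} (hl : IsPathFromTo l t q) (hpt : Step p t) :
    IsPathFromTo (p :: l) p q :=
  isPathFromTo_cons.2 ⟨rfl, Or.inr ⟨t, hpt, hl⟩⟩

lemma head_mem (hl : IsPathFromTo l p q) : p ∈ l :=
  List.mem_of_mem_head? hl.2.1

lemma last_mem (hl : IsPathFromTo l p q) : q ∈ l :=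
  List.mem_of_mem_getLast? hl.2.2

lemma bounds (hl : IsPathFromTo l p q) {x : ℤ × ℤ} (hx : x ∈ l) :
    p.1 ≤ x.1 ∧ x.2 ≤ p.2 ∧ x.1 ≤ q.1 ∧ q.2 ≤ x.2 := by
  induction l generalizing p x with
  | nil => simp at hx
  | cons y l ih =>
    obtain ⟨rfl, ⟨rfl, rfl⟩ | ⟨t, hyt, htl⟩⟩ := isPathFromTo_cons.1 hl
    · obtain rfl := List.mem_singleton.1 hx
      omega
    · have := step_iff.1 hyt
      rcases List.mem_cons.1 hx with rfl | hx
      · have := ih htl htl.head_mem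
        omega
      · have := ih htl hx
        omega

lemma exists_mem_fst_sub_snd_eq (hl : IsPathFromTo l p q) {d : ℤ}
    (hpd : p.1 - p.2 ≤ d) (hdq : d ≤ q.1 - q.2) : ∃ x ∈ l, x.1 - x.2 = d := by
  induction l generalizing p with
  | nil => simp [isPathFromTo_iff] at hl
  | cons y l ih =>
    obtain ⟨rfl, ⟨rfl, rfl⟩ | ⟨t, hyt, htl⟩⟩ := isPathFromTo_cons.1 hl
    · exact ⟨y, List.mem_cons_self, by omega⟩
    · rcases hpd.eq_or_lt with rfl | hlt
      · exact ⟨y, List.mem_cons_self, rfl⟩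
      · have := step_iff.1 hyt
        obtain ⟨x, hx, hxd⟩ := ih htl (by omega)
        exact ⟨x, List.mem_cons_of_mem y hx, hxd⟩

end IsPathFromTo

lemma weakly_comparable_of_isChain_step {l : List (ℤ × ℤ)} (hl : l.IsChain Step) {x y : ℤ × ℤ}
    (hx : x ∈ l) (hy : y ∈ l) :
    x.1 ≤ y.1 ∧ y.2 ≤ x.2 ∨ y.1 ≤ x.1 ∧ x.2 ≤ y.2 := by
  let R : ℤ × ℤ → ℤ × ℤ → Prop := fun p q => p.1 ≤ q.1 ∧ q.2 ≤ p.2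
  have : Trans R R R := ⟨fun h₁ h₂ => ⟨h₁.1.trans h₂.1, h₂.2.trans h₁.2⟩⟩
  have hR : l.Pairwise R :=
    (hl.imp fun u v huv => by have := step_iff.1 huv; simp only [R]; omega).pairwise
  exact List.Pairwise.forall_of_forall_of_flip (R := fun u v => R u v ∨ R v u)
    (fun u _ => Or.inl ⟨le_rfl, le_rfl⟩) (hR.imp Or.inl) (hR.imp Or.inr) hx hy

lemma exists_isPathFromTo_of_forall_step (S : Set (ℤ × ℤ)) (n : ℕ) {p : ℤ × ℤ} (hp : p ∈ S)
    (hstep : ∀ s ∈ S, s.1 - s.2 < p.1 - p.2 + n → ∃ t ∈ S, Step s t) :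
    ∃ l q, IsPathFromTo l p q ∧ q.1 - q.2 = p.1 - p.2 + n ∧ ∀ x ∈ l, x ∈ S := by
  induction n generalizing p with
  | zero => exact ⟨[p], p, by simp [isPathFromTo_iff], by simp, by simpa using hp⟩
  | succ n ih =>
    obtain ⟨t, ht, hpt⟩ := hstep p hp (by omega)
    have hdiag := step_iff.1 hpt
    obtain ⟨l, q, hl, hq, hlS⟩ := ih ht fun s hs hd => hstep s hs (by omega)
    refine ⟨p :: l, q, hl.cons hpt, by omega, ?_⟩
    simpa [hp] using hlS

lemma forall_superset_antichain_eq_iff {α : Type*} {r : α → α → Prop} {P : α → Prop}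
    {S : Set α} (hSP : ∀ x ∈ S, P x) (hS : IsAntichain r S) :
    (∀ S' : Set α, (∀ x ∈ S', P x) → IsAntichain r S' → S ⊆ S' → S = S') ↔
      ∀ x, P x → x ∉ S → ∃ s ∈ S, r s x ∨ r x s := by
  constructor
  · intro hmax x hx hxS
    by_contra! hinc
    have hins : IsAntichain r (insert x S) :=
      hS.insert (fun s hs _ => (hinc s hs).1) (fun s hs _ => (hinc s hs).2)
    exact hxS ((hmax _ (Set.forall_mem_insert.2 ⟨hx, hSP⟩) hins (Set.subset_insert x S)).symm ▸
      Set.mem_insert x S)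
  · intro hsat S' hS'P hS' hSS'
    refine hSS'.antisymm fun x hx => ?_
    by_contra hxS
    obtain ⟨s, hs, hsx | hxs⟩ := hsat x (hS'P x hx) hxS
    · exact hS' (hSS' hs) hx (fun h => hxS (h ▸ hs)) hsx
    · exact hS' hx (hSS' hs) (fun h => hxS (h ▸ hs)) hxs

section MaximalAntichain

variable {a b : ℕ} {S : Set (ℤ × ℤ)}

lemma fst_le_of_snd_lt (hac : IsAntichain (ple b) S) {p q : ℤ × ℤ} (hp : p ∈ S) (hq : q ∈ S)
    (h : p.2 < q.2) : q.1 ≤ p.1 := by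
  by_contra! h'
  exact hac hp hq (by rintro rfl; omega) (Or.inr (Or.inl ⟨h', h⟩))

lemma snd_le_snd_add (hS : ∀ p ∈ S, memP a b p) (hac : IsAntichain (ple b) S) {p q : ℤ × ℤ}
    (hp : p ∈ S) (hq : q ∈ S) : q.2 ≤ p.2 + b := by
  by_contra! h
  obtain ⟨-, -, hp1, -⟩ := hS p hp
  obtain ⟨-, -, -, hq2⟩ := hS q hq
  exact hac hp hq (by rintro rfl; omega) (Or.inr (Or.inr ⟨by omega, by omega, by omega⟩))

lemma eq_of_fst_sub_snd_eq (hac : IsAntichain (ple b) S) {p q : ℤ × ℤ} (hp : p ∈ S)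
    (hq : q ∈ S) (h : p.1 - p.2 = q.1 - q.2) : p = q := by
  have := fst_le_of_snd_lt hac hp hq
  have := fst_le_of_snd_lt hac hq hp
  ext <;> omega

lemma exists_mem_lt_or_gt
    (hsat : ∀ x, memP a b x → x ∉ S → ∃ s ∈ S, ple b s x ∨ ple b x s) {x y : ℤ}
    (hxy : memP a b (x, y)) (hxyS : (x, y) ∉ S) :
    ∃ s ∈ S, s.1 < x ∧ s.2 < y ∨ s.2 ≤ b ∧ b + 1 ≤ y ∧ s.2 < y - b ∨
      x < s.1 ∧ y < s.2 ∨ y ≤ b ∧ b + 1 ≤ s.2 ∧ y < s.2 - b := by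
  obtain ⟨s, hs, hcmp⟩ := hsat _ hxy hxyS
  have hne : s ≠ (x, y) := fun h => hxyS (h ▸ hs)
  simp only [ple, Prod.ext_iff, ne_eq] at hcmp hne
  exact ⟨s, hs, by omega⟩

variable {p₀ : ℤ × ℤ}

lemma lowest_snd_le (ha : 1 ≤ a) (hb : 1 ≤ b) (hS : ∀ p ∈ S, memP a b p)
    (hsat : ∀ x, memP a b x → x ∉ S → ∃ s ∈ S, ple b s x ∨ ple b x s)
    (hmin : ∀ s ∈ S, p₀.2 ≤ s.2) (hp₀ : p₀ ∈ S) : p₀.2 ≤ b := by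
  by_contra! h
  obtain ⟨-, -, -, h₂⟩ := hS p₀ hp₀
  obtain ⟨s, hs, hcmp⟩ := exists_mem_lt_or_gt (x := a) (y := p₀.2 - 1) hsat
    (by simp only [memP]; omega) fun h' => by have := hmin _ h'; omega
  obtain ⟨-, hs₁, -, hs₂⟩ := hS s hs
  have := hmin s hs
  omega

lemma top_mem (ha : 1 ≤ a) (hb : 1 ≤ b) (hS : ∀ p ∈ S, memP a b p) (hac : IsAntichain (ple b) S)
    (hsat : ∀ x, memP a b x → x ∉ S → ∃ s ∈ S, ple b s x ∨ ple b x s)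
    (hmin : ∀ s ∈ S, p₀.2 ≤ s.2) (hp₀ : p₀ ∈ S) : (1, p₀.2 + b) ∈ S := by
  have := lowest_snd_le ha hb hS hsat hmin hp₀
  obtain ⟨-, -, h₁, -⟩ := hS p₀ hp₀
  by_contra h
  obtain ⟨s, hs, hcmp⟩ := exists_mem_lt_or_gt hsat (by simp only [memP]; omega) h
  obtain ⟨hs₁, -, -, -⟩ := hS s hs
  have := hmin s hs
  have := snd_le_snd_add hS hac hp₀ hs
  omega

lemma bottom_mem (ha : 1 ≤ a) (hb : 1 ≤ b) (hS : ∀ p ∈ S, memP a b p)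
    (hac : IsAntichain (ple b) S)
    (hsat : ∀ x, memP a b x → x ∉ S → ∃ s ∈ S, ple b s x ∨ ple b x s)
    (hmin : ∀ s ∈ S, p₀.2 ≤ s.2) (hp₀ : p₀ ∈ S) : ((a : ℤ), p₀.2) ∈ S := by
  have := lowest_snd_le ha hb hS hsat hmin hp₀
  obtain ⟨-, -, h₁, -⟩ := hS p₀ hp₀
  by_contra h
  obtain ⟨s, hs, hcmp⟩ := exists_mem_lt_or_gt hsat (by simp only [memP]; omega) h
  obtain ⟨-, hs₁, -, -⟩ := hS s hs
  have := hmin s hs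
  have := snd_le_snd_add hS hac hp₀ hs
  omega

/-- If neither neighbour were in `S`, one of them would be comparable with no point of `S`:
on the lowest level take the right one, otherwise the lower one forces a point of `S` further
right on the same level, and then the right one does. -/
lemma exists_step_mem (hS : ∀ p ∈ S, memP a b p) (hac : IsAntichain (ple b) S)
    (hsat : ∀ x, memP a b x → x ∉ S → ∃ s ∈ S, ple b s x ∨ ple b x s)
    (hmin : ∀ s ∈ S, p₀.2 ≤ s.2) (hp₀ : p₀ ∈ S) {s : ℤ × ℤ} (hs : s ∈ S)
    (hsd : s.1 - s.2 < a - p₀.2) : ∃ t ∈ S, Step s t := by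
  suffices (s.1 + 1, s.2) ∈ S ∨ (s.1, s.2 - 1) ∈ S by
    rcases this with h | h
    · exact ⟨_, h, step_iff.2 (Or.inl ⟨rfl, rfl⟩)⟩
    · exact ⟨_, h, step_iff.2 (Or.inr ⟨rfl, rfl⟩)⟩
  by_contra! ⟨hright, hdown⟩
  obtain ⟨hs₁, hs₂, hs₃, hs₄⟩ := hS s hs
  obtain ⟨-, -, hp₀₁, -⟩ := hS p₀ hp₀
  rcases (hmin s hs).eq_or_lt with hsm | hsm
  · obtain ⟨u, hu, hcmp⟩ := exists_mem_lt_or_gt hsat (by simp only [memP]; omega) hright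
    have := hmin u hu
    have := fst_le_of_snd_lt hac hs hu
    have := snd_le_snd_add hS hac hp₀ hu
    omega
  · obtain ⟨t, ht, hcmp⟩ := exists_mem_lt_or_gt hsat (by simp only [memP]; omega) hdown
    have := fst_le_of_snd_lt hac hs ht
    have := fst_le_of_snd_lt hac ht hs
    have := snd_le_snd_add hS hac hp₀ ht
    have := snd_le_snd_add hS hac ht hs
    have ht' : t.2 = s.2 ∧ s.1 < t.1 := by omega
    obtain ⟨-, ht₂, -, -⟩ := hS t ht
    obtain ⟨u, hu, hcmp'⟩ := exists_mem_lt_or_gt hsat (by simp only [memP]; omega) hright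
    have := fst_le_of_snd_lt hac hs hu
    have := fst_le_of_snd_lt hac hu ht
    have := snd_le_snd_add hS hac hu hs
    have := snd_le_snd_add hS hac hs hu
    omega

lemma exists_isPathFromTo_eq_of_lowest (ha : 1 ≤ a) (hb : 1 ≤ b) (hS : ∀ p ∈ S, memP a b p)
    (hac : IsAntichain (ple b) S)
    (hsat : ∀ x, memP a b x → x ∉ S → ∃ s ∈ S, ple b s x ∨ ple b x s)
    (hmin : ∀ s ∈ S, p₀.2 ≤ s.2) (hp₀ : p₀ ∈ S) :
    ∃ l, IsPathFromTo l (1, p₀.2 + b) (a, p₀.2) ∧ S = {x | x ∈ l} := by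
  obtain ⟨l, q, hl, hq, hlS⟩ := exists_isPathFromTo_of_forall_step S (a + b - 1)
    (top_mem ha hb hS hac hsat hmin hp₀)
    fun s hs hsd => exists_step_mem hS hac hsat hmin hp₀ hs (by omega)
  obtain rfl : q = ((a : ℤ), p₀.2) :=
    eq_of_fst_sub_snd_eq hac (hlS q hl.last_mem) (bottom_mem ha hb hS hac hsat hmin hp₀)
      (by simp only; omega)
  refine ⟨l, hl, Set.ext fun x => ⟨fun hx => ?_, hlS x⟩⟩
  obtain ⟨hx₁, hx₂, -, -⟩ := hS x hx
  have := hmin x hx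
  have := snd_le_snd_add hS hac hp₀ hx
  obtain ⟨y, hy, hyx⟩ := hl.exists_mem_fst_sub_snd_eq (d := x.1 - x.2)
    (by simp only; omega) (by simp only; omega)
  exact eq_of_fst_sub_snd_eq hac hx (hlS y hy) hyx.symm ▸ hy

lemma exists_path_of_saturated (ha : 1 ≤ a) (hb : 1 ≤ b) (hS : ∀ p ∈ S, memP a b p)
    (hac : IsAntichain (ple b) S)
    (hsat : ∀ x, memP a b x → x ∉ S → ∃ s ∈ S, ple b s x ∨ ple b x s) :
    ∃ h : ℕ, 1 ≤ h ∧ h ≤ b ∧ ∃ l : List (ℤ × ℤ),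
      IsPathFromTo l (1, (b : ℤ) + (h : ℤ)) ((a : ℤ), (h : ℤ)) ∧ S = {x | x ∈ l} := by
  have hne : S.Nonempty := by
    by_contra hS₀
    obtain ⟨s, hs, -⟩ := hsat (1, 1) (by simp only [memP]; omega)
      fun h => hS₀ ⟨_, h⟩
    exact hS₀ ⟨s, hs⟩
  obtain ⟨m, ⟨x, hxm⟩, hmin⟩ := Int.exists_least_of_bdd (P := fun y => ∃ x, (x, y) ∈ S)
    ⟨1, fun y ⟨x, hx⟩ => (hS _ hx).2.2.1⟩ ⟨hne.some.2, hne.some.1, hne.some_mem⟩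
  have hmin' : ∀ s ∈ S, (x, m).2 ≤ s.2 := fun s hs => hmin s.2 ⟨s.1, hs⟩
  obtain ⟨-, -, hm₁, -⟩ := hS _ hxm
  have hmb := lowest_snd_le ha hb hS hsat hmin' hxm
  obtain ⟨l, hl, rfl⟩ := exists_isPathFromTo_eq_of_lowest ha hb hS hac hsat hmin' hxm
  refine ⟨m.toNat, by omega, by omega, l, ?_, rfl⟩
  rwa [Int.toNat_of_nonneg (by omega), add_comm]

end MaximalAntichain

section Path

variable {a b : ℕ} {l : List (ℤ × ℤ)}

lemma isAntichain_of_isPathFromTo {p q : ℤ × ℤ} (hl : IsPathFromTo l p q)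
    (hpq : p.2 ≤ q.2 + b) : IsAntichain (ple b) {x | x ∈ l} := by
  intro x hx y hy hxy hle
  have := weakly_comparable_of_isChain_step hl.1 hx hy
  have := hl.bounds hx
  have := hl.bounds hy
  simp only [ple, Prod.ext_iff, ne_eq] at hle hxy
  omega

lemma exists_mem_ple_or_ple {h : ℕ} (hhb : h ≤ b)
    (hl : IsPathFromTo l (1, (b : ℤ) + (h : ℤ)) ((a : ℤ), (h : ℤ)))
    {r : ℤ × ℤ} (hr : memP a b r) (hrl : r ∉ l) : ∃ s ∈ l, ple b s r ∨ ple b r s := by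
  obtain ⟨hr₁, hr₂, hr₃, hr₄⟩ := hr
  by_cases hlow : (b : ℤ) + h < r.2
  · refine ⟨_, hl.last_mem, Or.inl (Or.inr (Or.inr ?_))⟩
    simp only
    omega
  by_cases hhigh : r.2 < h
  · refine ⟨_, hl.head_mem, Or.inr (Or.inr (Or.inr ?_))⟩
    simp only
    omega
  obtain ⟨s, hs, hsr⟩ := hl.exists_mem_fst_sub_snd_eq (d := r.1 - r.2)
    (by simp only; omega) (by simp only; omega)
  have hne : s ≠ r := fun h => hrl (h ▸ hs)
  refine ⟨s, hs, ?_⟩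
  simp only [ple, Prod.ext_iff, ne_eq] at hne ⊢
  omega

end Path

theorem stmt_6 (a b : ℕ) (ha : 2 ≤ a) (hab : a ≤ b) (S : Set (ℤ × ℤ))
    (hS : ∀ p ∈ S, memP a b p) :
    (IsAntichain (ple b) S ∧
        ∀ S' : Set (ℤ × ℤ), (∀ p ∈ S', memP a b p) → IsAntichain (ple b) S' →
          S ⊆ S' → S = S') ↔
    ∃ h : ℕ, 1 ≤ h ∧ h ≤ b ∧ ∃ l : List (ℤ × ℤ),
      IsPathFromTo l (1, (b : ℤ) + (h : ℤ)) ((a : ℤ), (h : ℤ)) ∧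
      S = {x | x ∈ l} := by
  constructor
  · rintro ⟨hac, hmax⟩
    exact exists_path_of_saturated (by omega) (by omega) hS hac
      ((forall_superset_antichain_eq_iff hS hac).1 hmax)
  · rintro ⟨h, -, hhb, l, hl, rfl⟩
    have hac := isAntichain_of_isPathFromTo (b := b) hl (by simp only; omega)
    exact ⟨hac, (forall_superset_antichain_eq_iff hS hac).2
      fun r hr hrl => exists_mem_ple_or_ple hhb hl hr hrl⟩
end

section
/- Let P = [a] × [2b] with partial order (x,y) ⪯ (z,t) iff (x,y)=(z,t), or (x<z and y<t), or (y ≤ b and t ≥ b+1 and y < t-b). Any path from (1,b+h) to (a,h) (steps (1,0) or (0,-1)), with 1 ≤ h ≤ b, is an antichain in P. -/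
/-!
Along a path the first coordinate weakly increases and the second weakly decreases, so any two
points of it are comparable for `PathLE` below. Two such points are never related by the product
part of `ple`, and the remaining clause `y ≤ b < t`, `y < t - b` would need the earlier point to sit
more than `b` above the later one, while the whole path lies in the strip `h ≤ y ≤ b + h`.
-/

def PathLE (p q : ℤ × ℤ) : Prop := p.1 ≤ q.1 ∧ q.2 ≤ p.2

instance : Std.Refl PathLE := ⟨fun _ => ⟨le_rfl, le_rfl⟩⟩

instance : IsTrans (ℤ × ℤ) PathLE :=
  ⟨fun _ _ _ hpq hqr => ⟨hpq.1.trans hqr.1, hqr.2.trans hpq.2⟩⟩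

lemma Step.pathLE {p q : ℤ × ℤ} (hpq : Step p q) : PathLE p q := by
  rcases hpq with rfl | rfl <;> constructor <;> simp

lemma List.Pairwise.isChain_setOf_mem {α : Type*} {r : α → α → Prop} {l : List α}
    (hl : l.Pairwise r) : _root_.IsChain r {x | x ∈ l} :=
  haveI : Std.Symm fun x y => r x y ∨ r y x := ⟨fun _ _ => Or.symm⟩
  (hl.imp Or.inl).set_pairwise

namespace IsPathFromTo

variable {l : List (ℤ × ℤ)} {p q : ℤ × ℤ}

lemma pairwise_pathLE (hl : IsPathFromTo l p q) : l.Pairwise PathLE :=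
  List.isChain_iff_pairwise.mp (hl.1.imp fun _ _ => Step.pathLE)

lemma pathLE_of_mem (hl : IsPathFromTo l p q) {x : ℤ × ℤ} (hx : x ∈ l) :
    PathLE p x ∧ PathLE x q := by
  have hpair := hl.pairwise_pathLE
  obtain ⟨-, hhead, hlast⟩ := hl
  have hhead' : l.head (List.ne_nil_of_mem hx) = p := by
    simpa [List.head?_eq_some_head (List.ne_nil_of_mem hx)] using hhead
  have hlast' : l.getLast (List.ne_nil_of_mem hx) = q := by
    simpa [List.getLast?_eq_some_getLast (List.ne_nil_of_mem hx)] using hlast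
  exact ⟨hhead' ▸ hpair.rel_head hx, hlast' ▸ hpair.rel_getLast hx⟩

end IsPathFromTo

lemma isAntichain_ple_of_isChain_pathLE {b : ℕ} {h : ℤ} {s : Set (ℤ × ℤ)}
    (hs : IsChain PathLE s) (hbound : ∀ x ∈ s, h ≤ x.2 ∧ x.2 ≤ b + h) :
    IsAntichain (ple b) s := by
  intro p hp q hq hne hple
  have hp' := hbound p hp
  have hq' := hbound q hq
  rcases hple with rfl | hprod | hshift
  · exact hne rfl
  all_goals rcases hs hp hq hne with ⟨_, _⟩ | ⟨_, _⟩ <;> omega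

theorem stmt_8_general (a b h : ℕ)
    (l : List (ℤ × ℤ))
    (hl : IsPathFromTo l (1, (b : ℤ) + (h : ℤ)) ((a : ℤ), (h : ℤ))) :
    IsAntichain (ple b) {x | x ∈ l} := by
  refine isAntichain_ple_of_isChain_pathLE (h := h) hl.pairwise_pathLE.isChain_setOf_mem ?_
  intro x hx
  obtain ⟨⟨-, hupper⟩, ⟨-, hlower⟩⟩ := hl.pathLE_of_mem hx
  exact ⟨hlower, hupper⟩

theorem stmt_8 (a b h : ℕ) (ha : 2 ≤ a) (hab : a ≤ b) (h1 : 1 ≤ h) (h2 : h ≤ b)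
    (l : List (ℤ × ℤ))
    (hl : IsPathFromTo l (1, (b : ℤ) + (h : ℤ)) ((a : ℤ), (h : ℤ))) :
    IsAntichain (ple b) {x | x ∈ l} :=
  stmt_8_general a b h l hl
end

section
/- Let P = [a] × [2b] with the described partial order, and let 1 ≤ t ≤ a-1. Then the maximum cardinality of a subset of P containing no chain of t+1 elements is (a+b)t. -/
/-!
The map `chainIndex` sends `(x, y)` to its diagonal `y - x`, with each diagonal `d ≤ b` glued
to the diagonal `d + a + b`; it takes `a + b` values on `P` and each of its fibres is a chain.
Hence a set without chains of `t + 1` elements meets each fibre in at most `t` points and has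
at most `(a + b) t` elements. Conversely, for `1 ≤ j ≤ t` the zigzags `zigzag a b j` are
pairwise disjoint antichains of size `a + b`, and a chain meets each of them at most once, so
their union has `(a + b) t` elements and no chain of `t + 1` elements.
-/

open Finset

section ChainsAndAntichains

variable {α β : Type*} {r : α → α → Prop}

theorem card_le_mul_of_isChain_fibers [DecidableEq β] {S : Finset α} {T : Finset β} (f : α → β)
    (hf : ∀ p ∈ S, f p ∈ T) (hfib : ∀ i ∈ T, IsChain r (↑{p ∈ S | f p = i} : Set α)) {t : ℕ}
    (hS : ∀ c ⊆ S, IsChain r (c : Set α) → #c ≤ t) : #S ≤ #T * t :=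
  mul_comm t #T ▸ card_le_mul_card_image_of_maps_to hf t fun i hi ↦
    hS _ (filter_subset _ _) (hfib i hi)

theorem card_le_of_isChain_of_subset_biUnion [DecidableEq α] {ι : Type*} {I : Finset ι}
    {A : ι → Finset α} (hA : ∀ i ∈ I, IsAntichain r (A i : Set α)) {c : Finset α}
    (hc : IsChain r (c : Set α)) (hcA : c ⊆ I.biUnion A) : #c ≤ #I := by
  rw [← inter_eq_left.2 hcA, inter_biUnion, ← mul_one #I]
  exact card_biUnion_le_card_mul _ _ 1 fun i hi ↦ card_le_one.2 fun p hp q hq ↦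
    inter_subsingleton_of_isChain_of_isAntichain hc (hA i hi) (mem_inter.1 hp) (mem_inter.1 hq)

end ChainsAndAntichains

def chainIndex (a b : ℕ) (p : ℤ × ℤ) : ℤ :=
  if p.2 - p.1 ≤ b then p.2 - p.1 else p.2 - p.1 - (a + b)

theorem chainIndex_mem_Icc {a b : ℕ} {p : ℤ × ℤ} (hp : memP a b p) :
    chainIndex a b p ∈ Icc (1 - a : ℤ) b := by
  obtain ⟨h1, h2, h3, h4⟩ := hp
  rw [mem_Icc, chainIndex]
  split_ifs <;> omega

theorem isChain_ple_chainIndex_fiber (a b : ℕ) (i : ℤ) :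
    IsChain (ple b) {p | memP a b p ∧ chainIndex a b p = i} := by
  rintro p ⟨⟨h1, h2, h3, h4⟩, rfl⟩ q ⟨⟨h5, h6, h7, h8⟩, hpq⟩ -
  simp only [chainIndex] at hpq
  simp only [ple, Prod.ext_iff]
  split_ifs at hpq <;> omega

noncomputable def zigzag (a b : ℕ) (j : ℤ) : Finset (ℤ × ℤ) :=
  (Icc (b + 1 - j : ℤ) (2 * b + 1 - j)).image (fun y ↦ (a + 1 - j, y)) ∪
  (Icc (a + 2 - j : ℤ) a).image (fun x ↦ (x, b + 1 - j)) ∪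
  (Icc (1 : ℤ) (a - j)).image (fun x ↦ (x, 2 * b + 1 - j))

theorem mem_zigzag {a b : ℕ} {j : ℤ} {p : ℤ × ℤ} :
    p ∈ zigzag a b j ↔
      (p.1 = a + 1 - j ∧ b + 1 - j ≤ p.2 ∧ p.2 ≤ 2 * b + 1 - j) ∨
      (p.2 = b + 1 - j ∧ a + 2 - j ≤ p.1 ∧ p.1 ≤ a) ∨
      (p.2 = 2 * b + 1 - j ∧ 1 ≤ p.1 ∧ p.1 ≤ a - j) := by
  obtain ⟨x, y⟩ := p
  simp only [zigzag, mem_union, mem_image, mem_Icc, Prod.ext_iff]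
  constructor
  · rintro ((⟨y', h, rfl, rfl⟩ | ⟨x', h, rfl, rfl⟩) | ⟨x', h, rfl, rfl⟩) <;> omega
  · rintro (⟨rfl, h⟩ | ⟨rfl, h⟩ | ⟨rfl, h⟩)
    exacts [.inl (.inl ⟨y, h, rfl, rfl⟩), .inl (.inr ⟨x, h, rfl, rfl⟩), .inr ⟨x, h, rfl, rfl⟩]

theorem zigzag_isAntichain (a b : ℕ) (j : ℤ) :
    IsAntichain (ple b) (zigzag a b j : Set (ℤ × ℤ)) := by
  intro p hp q hq hne
  rw [mem_coe, mem_zigzag] at hp hq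
  rw [Ne, Prod.ext_iff] at hne
  show ¬ ple b p q
  simp only [ple, Prod.ext_iff]
  omega

theorem disjoint_zigzag (a b : ℕ) {j k : ℤ} (hjk : j ≠ k) :
    Disjoint (zigzag a b j) (zigzag a b k) := by
  rw [disjoint_left]
  intro p hp hq
  rw [mem_zigzag] at hp hq
  omega

theorem memP_of_mem_zigzag {a b : ℕ} {j : ℤ} (hj : 1 ≤ j) (hja : j ≤ a) (hab : a ≤ b)
    {p : ℤ × ℤ} (hp : p ∈ zigzag a b j) : memP a b p := by
  rw [mem_zigzag] at hp
  unfold memP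
  omega

theorem card_zigzag {a b : ℕ} {j : ℤ} (hj : 1 ≤ j) (hja : j ≤ a) :
    #(zigzag a b j) = a + b := by
  rw [zigzag, card_union_of_disjoint, card_union_of_disjoint,
    card_image_of_injective _ (Prod.mk_right_injective _),
    card_image_of_injective _ (Prod.mk_left_injective _),
    card_image_of_injective _ (Prod.mk_left_injective _), Int.card_Icc, Int.card_Icc, Int.card_Icc]
  · omega
  all_goals
    refine disjoint_left.2 fun p hp hq ↦ ?_
    obtain ⟨x, hx, rfl⟩ := mem_image.1 hq
    simp only [mem_union, mem_image, mem_Icc, Prod.ext_iff] at hp hx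
    grind

theorem stmt_10_general (a b t : ℕ) (hab : a ≤ b) (hta : t ≤ a - 1) :
    IsGreatest {n | ∃ S : Finset (ℤ × ℤ), (∀ p ∈ S, memP a b p) ∧
      (∀ c : Finset (ℤ × ℤ), c ⊆ S → IsChain (ple b) (c : Set (ℤ × ℤ)) → c.card ≤ t) ∧
      S.card = n} ((a + b) * t) := by
  have hj : ∀ j ∈ Icc (1 : ℤ) t, 1 ≤ j ∧ j ≤ a := fun j hj ↦ by rw [mem_Icc] at hj; omega
  refine ⟨⟨(Icc (1 : ℤ) t).biUnion (zigzag a b), ?_, ?_, ?_⟩, ?_⟩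
  · intro p hp
    obtain ⟨j, hjt, hp⟩ := mem_biUnion.1 hp
    exact memP_of_mem_zigzag (hj j hjt).1 (hj j hjt).2 hab hp
  · intro c hc hchain
    simpa using card_le_of_isChain_of_subset_biUnion (fun j _ ↦ zigzag_isAntichain a b j) hchain hc
  · rw [card_biUnion fun j _ k _ ↦ disjoint_zigzag a b,
      sum_congr rfl fun j hjt ↦ card_zigzag (hj j hjt).1 (hj j hjt).2]
    simp [mul_comm]
  · rintro n ⟨S, hSP, hS, rfl⟩
    have hcard : #(Icc (1 - a : ℤ) b) = a + b := by rw [Int.card_Icc]; omega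
    exact hcard ▸ card_le_mul_of_isChain_fibers (chainIndex a b)
      (fun p hp ↦ chainIndex_mem_Icc (hSP p hp))
      (fun i _ ↦ (isChain_ple_chainIndex_fiber a b i).mono fun p hp ↦ by
        rw [coe_filter] at hp; exact ⟨hSP p hp.1, hp.2⟩) hS

theorem stmt_10 (a b t : ℕ) (ha : 2 ≤ a) (hab : a ≤ b) (ht1 : 1 ≤ t) (hta : t ≤ a - 1) :
    IsGreatest {n | ∃ S : Finset (ℤ × ℤ), (∀ p ∈ S, memP a b p) ∧
      (∀ c : Finset (ℤ × ℤ), c ⊆ S → IsChain (ple b) (c : Set (ℤ × ℤ)) → c.card ≤ t) ∧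
      S.card = n} ((a + b) * t) :=
  stmt_10_general a b t hab hta
end

section
/- (Lindström–Gessel–Viennot) Let Q_1,...,Q_t and P_1,...,P_t be points in Z×Z such that any system of t paths with steps (1,0), (0,-1) joining Q_i to P_{σ(i)} for a permutation σ and consisting of pairwise vertex-disjoint paths forces σ to be the identity. Then the number of t-tuples of pairwise vertex-disjoint paths with path i going from Q_i to P_i equals the determinant of the t×t matrix whose (i,j) entry is the number of paths from Q_i to P_j. -/
/-!
Expanding the determinant gives the signed count of all path systems `(σ, l)` with path `l i`
running from `Q i` to `P (σ i)`. On the systems in which two paths meet, take the least index `i` whose path meets another one,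
the first vertex `v` of path `i` lying on another path, and the least other index `j` whose path
passes through `v`; exchanging the tails of paths `i` and `j` after `v` does not change these
choices, so it is a sign-reversing involution and only vertex-disjoint systems survive. By
hypothesis these all have `σ = 1`.

Only acyclicity of the steps and finiteness of the sets of paths between two points matter; for
lattice steps both hold because a path increases strictly for the product order once the second
coordinate is negated.
-/

section General

variable {α : Type*}

theorem exists_isLeast_of_wellFoundedLT {β : Type*} [LinearOrder β] [WellFoundedLT β] {s : Set β}
    (hs : s.Nonempty) : ∃ i, IsLeast s i :=
  let ⟨i, hi⟩ := exists_minimal_of_wellFoundedLT (· ∈ s) hs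
  ⟨i, minimal_iff_isLeast.1 hi⟩

theorem List.exists_eq_append_cons_first {p : α → Prop} {l : List α} (h : ∃ x ∈ l, p x) :
    ∃ a v b, l = a ++ v :: b ∧ p v ∧ ∀ x ∈ a, ¬ p x := by
  classical
  obtain ⟨v, hv⟩ := Option.isSome_iff_exists.1
    (List.find?_isSome (p := fun x => decide (p x)) (xs := l) |>.2 (by simpa using h))
  obtain ⟨hpv, a, b, rfl, ha⟩ := List.find?_eq_some_iff_append.1 hv
  exact ⟨a, v, b, rfl, by simpa using hpv, fun x hx => by simpa using ha x hx⟩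

theorem List.Nodup.eq_of_eq_append_cons {l a₁ b₁ a₂ b₂ : List α} {v : α} (hl : l.Nodup)
    (h₁ : l = a₁ ++ v :: b₁) (h₂ : l = a₂ ++ v :: b₂) : a₁ = a₂ ∧ b₁ = b₂ := by
  have hv : v ∉ a₁ ∧ v ∉ b₁ := by
    subst h₁
    simpa using (List.nodup_cons.1 (List.nodup_middle.1 hl)).1
  obtain ⟨ha, -, hb⟩ := (List.append_cons_inj_of_notMem hv.1 hv.2).1 (h₁.symm.trans h₂)
  exact ⟨ha, hb⟩

theorem List.Nodup.eq_of_eq_append_cons_first {p : α → Prop} {l a₁ b₁ a₂ b₂ : List α} {v₁ v₂ : α}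
    (hl : l.Nodup) (h₁ : l = a₁ ++ v₁ :: b₁) (h₂ : l = a₂ ++ v₂ :: b₂) (hp₁ : p v₁) (hp₂ : p v₂)
    (ha₁ : ∀ x ∈ a₁, ¬ p x) (ha₂ : ∀ x ∈ a₂, ¬ p x) : a₁ = a₂ ∧ v₁ = v₂ ∧ b₁ = b₂ := by
  classical
  have hfind : ∀ {a v b}, l = a ++ v :: b → p v → (∀ x ∈ a, ¬ p x) →
      l.find? (fun x => decide (p x)) = some v := fun h hp ha =>
    List.find?_eq_some_iff_append.2 ⟨by simpa using hp, _, _, h, fun x hx => by simpa using ha x hx⟩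
  obtain rfl : v₁ = v₂ := Option.some_inj.1 ((hfind h₁ hp₁ ha₁).symm.trans (hfind h₂ hp₂ ha₂))
  obtain ⟨ha, hb⟩ := hl.eq_of_eq_append_cons h₁ h₂
  exact ⟨ha, rfl, hb⟩

theorem Nat.card_subtype_eq_card_and_add_card_and_not {β : Type*} {p : β → Prop} (q : β → Prop)
    (hp : {x | p x}.Finite) :
    Nat.card {x // p x} = Nat.card {x // p x ∧ q x} + Nat.card {x // p x ∧ ¬ q x} := by
  have := Set.ncard_inter_add_ncard_sdiff_eq_ncard {x | p x} {x | q x} hp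
  simp only [← Nat.card_coe_set_eq] at this
  exact this.symm

theorem Finset.sum_eq_zero_of_signReversing {β : Type*} (s : Finset β) (f : β → ℤ)
    (R : β → β → Prop) (total : ∀ x ∈ s, ∃ y, R x y) (mem : ∀ x ∈ s, ∀ y, R x y → y ∈ s)
    (symm : ∀ x ∈ s, ∀ y, R x y → R y x) (unique : ∀ x ∈ s, ∀ y z, R x y → R x z → y = z)
    (neg : ∀ x ∈ s, ∀ y, R x y → f y = -f x) : ∑ x ∈ s, f x = 0 := by
  choose g hg using total
  refine Finset.sum_involution g (fun x hx => by rw [neg x hx _ (hg x hx)]; ring) ?_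
    (fun x hx => mem x hx _ (hg x hx)) ?_
  · intro x hx hfx hgx
    have := neg x hx _ (hg x hx)
    rw [hgx] at this
    omega
  · intro x hx
    exact unique _ (mem x hx _ (hg x hx)) _ _ (hg _ _) (symm x hx _ (hg x hx))

end General

namespace LGV

open Equiv Function

variable {α ι : Type*}

def IsChainFromTo (r : α → α → Prop) (l : List α) (p q : α) : Prop :=
  l.IsChain r ∧ l.head? = some p ∧ l.getLast? = some q

theorem IsChainFromTo.swapTails {r : α → α → Prop} {a b c d : List α} {v p q p' q' : α}
    (h₁ : IsChainFromTo r (a ++ v :: b) p q) (h₂ : IsChainFromTo r (c ++ v :: d) p' q') :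
    IsChainFromTo r (a ++ v :: d) p q' := by
  obtain ⟨hc₁, hh₁, -⟩ := h₁
  obtain ⟨hc₂, -, hl₂⟩ := h₂
  refine ⟨?_, by cases a <;> simpa using hh₁, by rwa [List.getLast?_append_cons] at hl₂ ⊢⟩
  have hav : (a ++ [v]).IsChain r := by
    simpa using (show ((a ++ [v]) ++ b).IsChain r by simpa using hc₁).left_of_append
  simpa using hav.append_overlap (l₃ := d) (by simpa using hc₂.right_of_append) (by simp)

def IsChainSystem (r : α → α → Prop) (A B : ι → α) (σ : Perm ι) (l : ι → List α) : Prop :=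
  ∀ i, IsChainFromTo r (l i) (A i) (B (σ i))

def VertexDisjoint (l : ι → List α) : Prop := ∀ i j, i ≠ j → ∀ x, x ∈ l i → x ∉ l j

def OnOtherPath (l : ι → List α) (i : ι) (x : α) : Prop := ∃ m ≠ i, x ∈ l m

def Touches (l : ι → List α) (k : ι) : Prop := ∃ x ∈ l k, OnOtherPath l k x

section TailSwap

variable [LinearOrder ι] {σ σ' : Perm ι} {l l' : ι → List α}

def IsTailSwap (σ : Perm ι) (l : ι → List α) (σ' : Perm ι) (l' : ι → List α) : Prop :=
  ∃ (i j : ι) (v : α) (a b c d : List α),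
    IsLeast {k | Touches l k} i ∧ l i = a ++ v :: b ∧ (∀ x ∈ a, ¬ OnOtherPath l i x) ∧
    IsLeast {m | m ≠ i ∧ v ∈ l m} j ∧ l j = c ++ v :: d ∧
    σ' = σ * swap i j ∧ l' = update (update l i (a ++ v :: d)) j (c ++ v :: b)

theorem exists_isTailSwap [WellFoundedLT ι] (σ : Perm ι) (hl : ¬ VertexDisjoint l) :
    ∃ σ' l', IsTailSwap σ l σ' l' := by
  have hT : {k | Touches l k}.Nonempty := by
    simp only [VertexDisjoint, not_forall, not_not] at hl
    obtain ⟨i, j, hij, x, hxi, hxj⟩ := hl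
    exact ⟨i, x, hxi, j, hij.symm, hxj⟩
  obtain ⟨i, hi⟩ := exists_isLeast_of_wellFoundedLT hT
  obtain ⟨x, hx, hxo⟩ := hi.1
  obtain ⟨a, v, b, hab, ⟨m, hm, hvm⟩, ha⟩ := List.exists_eq_append_cons_first ⟨x, hx, hxo⟩
  obtain ⟨j, hj⟩ := exists_isLeast_of_wellFoundedLT (s := {m | m ≠ i ∧ v ∈ l m}) ⟨m, hm, hvm⟩
  obtain ⟨c, d, hcd⟩ := List.append_of_mem hj.1.2
  exact ⟨_, _, i, j, v, a, b, c, d, hi, hab, ha, hj, hcd, rfl, rfl⟩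

theorem IsTailSwap.unique {σ₁ σ₂ : Perm ι} {l₁ l₂ : ι → List α} (hl : ∀ k, (l k).Nodup)
    (h₁ : IsTailSwap σ l σ₁ l₁) (h₂ : IsTailSwap σ l σ₂ l₂) : σ₁ = σ₂ ∧ l₁ = l₂ := by
  obtain ⟨i, j₁, v₁, a₁, b₁, c₁, d₁, hi₁, hab₁, ha₁, hj₁, hcd₁, rfl, rfl⟩ := h₁
  obtain ⟨i₂, j₂, v₂, a₂, b₂, c₂, d₂, hi₂, hab₂, ha₂, hj₂, hcd₂, rfl, rfl⟩ := h₂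
  obtain rfl := hi₁.unique hi₂
  obtain ⟨rfl, rfl, rfl⟩ := (hl i).eq_of_eq_append_cons_first (p := OnOtherPath l i) hab₁ hab₂
    ⟨j₁, hj₁.1⟩ ⟨j₂, hj₂.1⟩ ha₁ ha₂
  obtain rfl := hj₁.unique hj₂
  obtain ⟨rfl, rfl⟩ := (hl j₁).eq_of_eq_append_cons hcd₁ hcd₂
  exact ⟨rfl, rfl⟩

theorem OnOtherPath.of_update_update {i j k : ι} {X Y : List α} {x : α}
    (hmem : ∀ x, x ∈ X ∨ x ∈ Y ↔ x ∈ l i ∨ x ∈ l j) (hki : k ≠ i) (hkj : k ≠ j)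
    (h : OnOtherPath (update (update l i X) j Y) k x) : OnOtherPath l k x := by
  obtain ⟨m, hmk, hxm⟩ := h
  by_cases hm : m = i ∨ m = j
  · have hxXY : x ∈ X ∨ x ∈ Y := by
      simp only [update_apply] at hxm
      split_ifs at hxm <;> tauto
    rcases (hmem x).1 hxXY with hx | hx
    exacts [⟨i, hki.symm, hx⟩, ⟨j, hkj.symm, hx⟩]
  · rw [not_or] at hm
    exact ⟨m, hmk, by simpa [hm.1, hm.2] using hxm⟩

theorem IsTailSwap.symm (hl : ∀ k, (l k).Nodup) (h : IsTailSwap σ l σ' l') :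
    IsTailSwap σ' l' σ l := by
  obtain ⟨i, j, v, a, b, c, d, hi, hab, ha, hj, hcd, rfl, rfl⟩ := h
  have hji : j ≠ i := hj.1.1
  have hij : i < j := lt_of_le_of_ne (hi.2 ⟨v, hj.1.2, i, hji.symm, hab ▸ by simp⟩) hji.symm
  set l' := update (update l i (a ++ v :: d)) j (c ++ v :: b)
  have hli : l' i = a ++ v :: d := by simp [l', hji.symm]
  have hlj : l' j = c ++ v :: b := by simp [l']
  have hlk : ∀ k, k ≠ i → k ≠ j → l' k = l k := fun k hki hkj => by simp [l', hki, hkj]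
  have hmem : ∀ x, x ∈ a ++ v :: d ∨ x ∈ c ++ v :: b ↔ x ∈ l i ∨ x ∈ l j := fun x => by
    rw [hab, hcd]; simp only [List.mem_append, List.mem_cons]; tauto
  refine ⟨i, j, v, a, d, c, b, ⟨?_, ?_⟩, hli, ?_, ⟨?_, ?_⟩, hlj, by simp [mul_assoc], ?_⟩
  · exact ⟨v, by simp [hli], j, hji, by simp [hlj]⟩
  · rintro k ⟨x, hxk, hxo⟩
    by_cases hk : k = i ∨ k = j
    · rcases hk with rfl | rfl <;> [exact le_rfl; exact hij.le]
    · rw [not_or] at hk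
      exact hi.2 ⟨x, hlk k hk.1 hk.2 ▸ hxk, hxo.of_update_update hmem hk.1 hk.2⟩
  · rintro x hxa ⟨m, hmi, hxm⟩
    by_cases hmj : m = j
    · subst hmj
      rw [hlj, List.mem_append, List.mem_cons] at hxm
      rcases hxm with hxc | rfl | hxb
      · exact ha x hxa ⟨m, hmi, hcd ▸ by simp [hxc]⟩
      · exact ha x hxa ⟨m, hmi, hcd ▸ by simp⟩
      · have := hl i
        rw [hab, List.nodup_append] at this
        exact this.2.2 x hxa x (by simp [hxb]) rfl
    · exact ha x hxa ⟨m, hmi, hlk m hmi hmj ▸ hxm⟩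
  · exact ⟨hji, by simp [hlj]⟩
  · rintro m ⟨hmi, hvm⟩
    by_cases hmj : m = j
    · exact hmj.ge
    · exact hj.2 ⟨hmi, hlk m hmi hmj ▸ hvm⟩
  · ext1 k
    simp only [l', update_apply]
    split_ifs <;> simp_all

theorem IsTailSwap.isChainSystem {r : α → α → Prop} {A B : ι → α} (hs : IsChainSystem r A B σ l)
    (h : IsTailSwap σ l σ' l') : IsChainSystem r A B σ' l' := by
  obtain ⟨i, j, v, a, b, c, d, -, hab, -, hj, hcd, rfl, rfl⟩ := h
  have hi := hs i
  have hj' := hs j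
  rw [hab] at hi
  rw [hcd] at hj'
  intro k
  simp only [Perm.mul_apply, update_apply]
  split_ifs with hkj hki
  · subst hkj; simpa [swap_apply_right] using hj'.swapTails hi
  · subst hki; simpa [swap_apply_left] using hi.swapTails hj'
  · simpa [swap_apply_of_ne_of_ne hki hkj] using hs k

theorem IsTailSwap.not_vertexDisjoint (h : IsTailSwap σ l σ' l') : ¬ VertexDisjoint l' := by
  obtain ⟨i, j, v, a, b, c, d, -, -, -, hj, -, -, rfl⟩ := h
  exact fun hd => hd i j hj.1.1.symm v (by simp [hj.1.1.symm]) (by simp)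

theorem IsTailSwap.sign_eq [Fintype ι] (h : IsTailSwap σ l σ' l') :
    Perm.sign σ' = -Perm.sign σ := by
  obtain ⟨i, j, v, a, b, c, d, hi, hab, ha, hj, hcd, rfl, rfl⟩ := h
  rw [Perm.sign_mul, Perm.sign_swap hj.1.1.symm, mul_neg_one]

end TailSwap

section Counting

variable [Fintype ι] {r : α → α → Prop} {A B : ι → α}

theorem finite_isChainSystem (hfin : ∀ p q, {l | IsChainFromTo r l p q}.Finite) (σ : Perm ι) :
    {l | IsChainSystem r A B σ l}.Finite :=
  (Set.Finite.pi fun i => hfin (A i) (B (σ i))).subset fun _ hl i _ => hl i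

theorem card_isChainSystem (σ : Perm ι) :
    Nat.card {l : ι → List α // IsChainSystem r A B σ l} =
      ∏ i, Nat.card {l : List α // IsChainFromTo r l (A i) (B (σ i))} := by
  rw [← Nat.card_pi]
  exact Nat.card_congr (Equiv.subtypePiEquivPi (p := fun i l => IsChainFromTo r l (A i) (B (σ i))))

variable [LinearOrder ι]

theorem sum_sign_mul_card_not_vertexDisjoint_eq_zero (hr : ∀ l : List α, l.IsChain r → l.Nodup)
    (hfin : ∀ σ, {l | IsChainSystem r A B σ l}.Finite) :
    ∑ σ : Perm ι, (Perm.sign σ : ℤ) *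
      Nat.card {l : ι → List α // IsChainSystem r A B σ l ∧ ¬ VertexDisjoint l} = 0 := by
  let N σ := ((hfin σ).subset (t := {l | IsChainSystem r A B σ l ∧ ¬ VertexDisjoint l})
    fun _ h => h.1).toFinset
  have hN : ∀ p ∈ Finset.univ.sigma N, IsChainSystem r A B p.1 p.2 ∧ ¬ VertexDisjoint p.2 := by
    intro p hp; simpa [N] using hp
  have hnodup : ∀ p ∈ Finset.univ.sigma N, ∀ k, (p.2 k).Nodup := fun p hp k =>
    hr _ ((hN p hp).1 k).1
  calc _ = ∑ σ : Perm ι, ∑ _l ∈ N σ, (Perm.sign σ : ℤ) := by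
        refine Finset.sum_congr rfl fun σ _ => ?_
        rw [Finset.sum_const, nsmul_eq_mul, mul_comm, ← Nat.card_eq_card_finite_toFinset]
        rfl
    _ = ∑ p ∈ Finset.univ.sigma N, (Perm.sign p.1 : ℤ) := by
      rw [Finset.sum_sigma]
    _ = 0 := by
      refine Finset.sum_eq_zero_of_signReversing _ _ (fun p q => IsTailSwap p.1 p.2 q.1 q.2)
        (fun p hp => ?_) (fun p hp q h => ?_) (fun p hp q h => h.symm (hnodup p hp))
        (fun p hp q q' h h' => ?_) (fun p hp q h => by simp [h.sign_eq])
      · obtain ⟨σ', l', h⟩ := exists_isTailSwap p.1 (hN p hp).2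
        exact ⟨⟨σ', l'⟩, h⟩
      · simpa [N] using ⟨h.isChainSystem (hN p hp).1, h.not_vertexDisjoint⟩
      · obtain ⟨hσ, hl⟩ := h.unique (hnodup p hp) h'
        exact Sigma.ext hσ (heq_of_eq hl)

theorem det_eq_sum_sign_mul_card_vertexDisjoint (hr : ∀ l : List α, l.IsChain r → l.Nodup)
    (hfin : ∀ p q, {l | IsChainFromTo r l p q}.Finite) :
    (Matrix.of fun i j => (Nat.card {l : List α // IsChainFromTo r l (A i) (B j)} : ℤ)).det =
      ∑ σ : Perm ι, (Perm.sign σ : ℤ) *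
        Nat.card {l : ι → List α // IsChainSystem r A B σ l ∧ VertexDisjoint l} := by
  calc _ = ∑ σ : Perm ι, (Perm.sign σ : ℤ) *
        Nat.card {l : ι → List α // IsChainSystem r A B σ l} := by
        rw [← Matrix.det_transpose, Matrix.det_apply']
        simp [card_isChainSystem]
    _ = _ := by
      simp only [Nat.card_subtype_eq_card_and_add_card_and_not VertexDisjoint
        (finite_isChainSystem hfin _), Nat.cast_add, mul_add, Finset.sum_add_distrib,
        sum_sign_mul_card_not_vertexDisjoint_eq_zero hr (finite_isChainSystem hfin), add_zero]

end Counting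

section Lattice

def flipSnd (x : ℤ × ℤ) : ℤ × ℤ := (x.1, -x.2)

theorem flipSnd_injective : Injective flipSnd := fun x y h => by
  simp only [flipSnd, Prod.mk.injEq, neg_inj] at h
  exact Prod.ext h.1 h.2

theorem flipSnd_lt_of_step {x y : ℤ × ℤ} (h : Step x y) : flipSnd x < flipSnd y := by
  rcases h with rfl | rfl <;> simp [flipSnd, Prod.lt_iff]

theorem pairwise_flipSnd_lt {l : List (ℤ × ℤ)} (h : l.IsChain Step) :
    l.Pairwise (flipSnd · < flipSnd ·) := by
  have : IsTrans (ℤ × ℤ) (flipSnd · < flipSnd ·) := ⟨fun _ _ _ => lt_trans⟩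
  exact List.isChain_iff_pairwise.1 (h.imp fun _ _ => flipSnd_lt_of_step)

theorem nodup_of_isChain_step {l : List (ℤ × ℤ)} (h : l.IsChain Step) : l.Nodup :=
  (pairwise_flipSnd_lt h).imp fun hlt heq => (heq ▸ hlt).false

theorem flipSnd_mem_Icc {l : List (ℤ × ℤ)} {p q x : ℤ × ℤ} (h : IsChainFromTo Step l p q)
    (hx : x ∈ l) : flipSnd x ∈ Set.Icc (flipSnd p) (flipSnd q) := by
  obtain ⟨hc, hp, hq⟩ := h
  have hle := (pairwise_flipSnd_lt hc).imp le_of_lt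
  constructor
  · obtain ⟨l', rfl⟩ := List.head?_eq_some_iff.1 hp
    rcases List.mem_cons.1 hx with rfl | hx
    exacts [le_rfl, List.rel_of_pairwise_cons hle hx]
  · obtain ⟨l', rfl⟩ := List.getLast?_eq_some_iff.1 hq
    rcases List.mem_append.1 hx with hx | hx
    · exact List.pairwise_append.1 hle |>.2.2 x hx q (by simp)
    · rw [List.mem_singleton.1 hx]

theorem finite_isChainFromTo_step (p q : ℤ × ℤ) : {l | IsChainFromTo Step l p q}.Finite := by
  have hbox : (flipSnd ⁻¹' Set.Icc (flipSnd p) (flipSnd q)).Finite :=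
    (Set.finite_Icc _ _).preimage flipSnd_injective.injOn
  refine Set.Finite.of_finite_image (f := fun l => {x | x ∈ l})
    (hbox.finite_subsets.subset ?_) ?_
  · rintro _ ⟨l, hl, rfl⟩ x hx
    exact flipSnd_mem_Icc hl hx
  · intro l₁ h₁ l₂ h₂ h
    refine List.Perm.eq_of_pairwise (fun a b _ _ hab hba => (lt_asymm hab hba).elim)
      (pairwise_flipSnd_lt h₁.1) (pairwise_flipSnd_lt h₂.1) ?_
    exact (List.perm_ext_iff_of_nodup (nodup_of_isChain_step h₁.1)
      (nodup_of_isChain_step h₂.1)).2 fun x => Set.ext_iff.1 h x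

end Lattice

end LGV

open LGV in
/-- Lindström–Gessel–Viennot lemma for lattice paths with steps `(1,0)`, `(0,-1)`. -/
theorem stmt_11 (t : ℕ) (Q P : Fin t → ℤ × ℤ)
    (hyp : ∀ (σ : Equiv.Perm (Fin t)) (l : Fin t → List (ℤ × ℤ)),
      (∀ i, IsPathFromTo (l i) (Q i) (P (σ i))) →
      (∀ i j, i ≠ j → ∀ x, x ∈ l i → x ∉ l j) → σ = 1) :
    (Nat.card {l : Fin t → List (ℤ × ℤ) //
        (∀ i, IsPathFromTo (l i) (Q i) (P i)) ∧
        (∀ i j, i ≠ j → ∀ x, x ∈ l i → x ∉ l j)} : ℤ) =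
      Matrix.det (Matrix.of fun i j : Fin t =>
        (Nat.card {l : List (ℤ × ℤ) // IsPathFromTo l (Q i) (P j)} : ℤ)) := by
  refine Eq.trans ?_ (det_eq_sum_sign_mul_card_vertexDisjoint (r := Step)
    (fun _ => nodup_of_isChain_step) finite_isChainFromTo_step).symm
  rw [Finset.sum_eq_single 1]
  · rw [Equiv.Perm.sign_one, Units.val_one, one_mul]
    rfl
  · intro σ _ hσ
    have : IsEmpty {l // IsChainSystem Step Q P σ l ∧ VertexDisjoint l} :=
      ⟨fun l => hσ (hyp σ l.1 l.2.1 l.2.2)⟩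
    simp
  · simp
end

section
/- Let X = (x_{ij}) and Y = (y_{ij}) be two a×b matrices of independent indeterminates over a field K, and let I be the ideal of K[x_{ij}, y_{ij}] generated by the 2×2 minors of the a×2b matrix [X Y] together with the 2×2 minors of the b×2a matrix [Xᵀ Yᵀ]. Then I equals the toric (Hibi) ideal of the distributive lattice [2]×[a]×[b], i.e., I is the kernel of the K-algebra map sending x_{ij} ↦ u_1 v_i w_j and y_{ij} ↦ u_2 v_i w_j into K[u_1,u_2,v_1,...,v_a,w_1,...,w_b]. -/
/-!
The monomial map sends `∏ₖ x_{sₖ iₖ jₖ}` to `∏ₖ u_{sₖ} v_{iₖ} w_{jₖ}`, so it only sees the three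
marginal multisets `{sₖ}`, `{iₖ}`, `{jₖ}` of the monomial, and its kernel is spanned by the
binomials `m - m'` whose monomials have equal marginals. Modulo the minors of `[X Y]` two variables
may exchange their middle indices, and modulo those of `[Xᵀ Yᵀ]` their last indices. With at most
two such exchanges any prescribed variable `x_{sij}` compatible with the marginals can be pulled out
of a monomial, so by induction on the degree all monomials with the same marginals are congruent.
-/

open MvPolynomial

/-- The set of `2 × 2` minors of the `a × 2b` concatenated matrix `[X Y]`,
whose entry in row `i` and column `(s, j)` is the variable `x_{s,i,j}`. -/
def minors2 (K : Type*) [CommRing K] (a b : ℕ) :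
    Set (MvPolynomial (Fin 2 × Fin a × Fin b) K) :=
  {d | ∃ (i₁ i₂ : Fin a) (c₁ c₂ : Fin 2 × Fin b),
    d = X (c₁.1, i₁, c₁.2) * X (c₂.1, i₂, c₂.2)
      - X (c₂.1, i₁, c₂.2) * X (c₁.1, i₂, c₁.2)}

/-- The set of `2 × 2` minors of the `b × 2a` concatenated matrix `[Xᵀ Yᵀ]`,
whose entry in row `j` and column `(s, i)` is the variable `x_{s,i,j}`. -/
def minors3 (K : Type*) [CommRing K] (a b : ℕ) :
    Set (MvPolynomial (Fin 2 × Fin a × Fin b) K) :=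
  {d | ∃ (j₁ j₂ : Fin b) (c₁ c₂ : Fin 2 × Fin a),
    d = X (c₁.1, c₁.2, j₁) * X (c₂.1, c₂.2, j₂)
      - X (c₂.1, c₂.2, j₁) * X (c₁.1, c₁.2, j₂)}

namespace Multiset

variable {α β : Type*}

theorem count_inl_disjSum [DecidableEq α] [DecidableEq β] (s : Multiset α) (t : Multiset β)
    (a : α) : count (Sum.inl a) (s.disjSum t) = count a s := by
  rw [disjSum, count_add, count_map_eq_count' _ _ Sum.inl_injective, add_eq_left,
    count_eq_zero]
  simp

theorem count_inr_disjSum [DecidableEq α] [DecidableEq β] (s : Multiset α) (t : Multiset β)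
    (b : β) : count (Sum.inr b) (s.disjSum t) = count b t := by
  rw [disjSum, count_add, count_map_eq_count' _ _ Sum.inr_injective, add_eq_right,
    count_eq_zero]
  simp

theorem disjSum_inj {s s' : Multiset α} {t t' : Multiset β} :
    s.disjSum t = s'.disjSum t' ↔ s = s' ∧ t = t' := by
  classical
  refine ⟨fun h => ⟨ext.2 fun a => ?_, ext.2 fun b => ?_⟩, fun h => h.1 ▸ h.2 ▸ rfl⟩
  · rw [← count_inl_disjSum s t, h, count_inl_disjSum]
  · rw [← count_inr_disjSum s t, h, count_inr_disjSum]

end Multiset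

namespace MvPolynomial

variable {σ τ R : Type*} [CommRing R]

theorem prod_map_X_eq_monomial [DecidableEq σ] (m : Multiset σ) :
    (m.map X).prod = monomial (Multiset.toFinsupp m) (1 : R) := by
  induction m using Multiset.induction with
  | empty => simp
  | cons v m ih =>
    rw [Multiset.map_cons, Multiset.prod_cons, ih, X, monomial_mul, one_mul,
      ← Multiset.singleton_add, map_add, Multiset.toFinsupp_singleton]

theorem monomial_one_eq_prod_map_X (d : σ →₀ ℕ) :
    monomial d (1 : R) = (d.toMultiset.map X).prod := by
  classical
  rw [prod_map_X_eq_monomial, Finsupp.toMultiset_toFinsupp]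

theorem ker_le_of_monomial_sub_monomial_mem (F : MvPolynomial σ R →ₐ[R] MvPolynomial τ R)
    (ψ : (σ →₀ ℕ) → (τ →₀ ℕ)) (hF : ∀ d, F (monomial d 1) = monomial (ψ d) 1)
    (I : Ideal (MvPolynomial σ R))
    (hI : ∀ d d', ψ d = ψ d' → monomial d 1 - monomial d' 1 ∈ I) :
    RingHom.ker F ≤ I := by
  intro f hf
  -- `κ d` is a representative of the fibre of `ψ` through `d` that depends only on `ψ d`.
  set κ := Function.invFun ψ ∘ ψ
  have hF' : ∀ d c, F (monomial d c) = monomial (ψ d) c := fun d c => by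
    rw [← mul_one c, ← smul_eq_mul, ← smul_monomial, map_smul, hF, smul_monomial, smul_eq_mul]
  have hκ : ∑ d ∈ f.support, monomial (κ d) (coeff d f) = 0 := by
    have := congrArg (AddMonoidAlgebra.mapDomainLinearMap R R (Function.invFun ψ))
      (RingHom.mem_ker.1 hf)
    rw [map_zero, ← support_sum_monomial_coeff f, map_sum, map_sum] at this
    simp_rw [hF', ← single_eq_monomial, AddMonoidAlgebra.mapDomainLinearMap_single] at this
    exact this
  have hf_eq : f = ∑ d ∈ f.support, C (coeff d f) * (monomial d 1 - monomial (κ d) 1) := by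
    simp_rw [mul_sub, C_mul_monomial, mul_one]
    rw [Finset.sum_sub_distrib, hκ, sub_zero, support_sum_monomial_coeff]
  rw [hf_eq]
  exact Ideal.sum_mem _ fun d _ => I.mul_mem_left _ <|
    hI _ _ (Function.invFun_eq ⟨d, rfl⟩).symm

end MvPolynomial

section Marginals

variable {ι α β M : Type*}

def marginals (m : Multiset (ι × α × β)) : Multiset ι × Multiset α × Multiset β :=
  (m.map Prod.fst, m.map (·.2.1), m.map (·.2.2))

@[simp]
theorem marginals_cons (v : ι × α × β) (m : Multiset (ι × α × β)) :
    marginals (v ::ₘ m) =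
      (v.1 ::ₘ (marginals m).1, v.2.1 ::ₘ (marginals m).2.1, v.2.2 ::ₘ (marginals m).2.2) := by
  simp [marginals]

theorem marginals_map_swap (m : Multiset (ι × α × β)) :
    marginals (m.map (Prod.map id Prod.swap)) =
      ((marginals m).1, (marginals m).2.2, (marginals m).2.1) := by
  simp [marginals, Multiset.map_map]

variable [CommMonoid M] (x : ι × α × β → M)

theorem exists_marginals_cons_eq_of_mem_mid
    (hx : ∀ s t i k j l, x (s, i, j) * x (t, k, l) = x (s, k, j) * x (t, i, l))
    {m : Multiset (ι × α × β)} {s : ι} {i₀ i : α} {j : β} (hv : (s, i₀, j) ∈ m)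
    (hi : i ∈ (marginals m).2.1) :
    ∃ m₀, marginals ((s, i, j) ::ₘ m₀) = marginals m ∧
      (((s, i, j) ::ₘ m₀).map x).prod = (m.map x).prod := by
  obtain ⟨r, rfl⟩ := Multiset.exists_cons_of_mem hv
  by_cases h : i₀ = i
  · exact h ▸ ⟨r, rfl, rfl⟩
  obtain ⟨⟨t, i', l⟩, hw, rfl⟩ : ∃ w ∈ r, w.2.1 = i := by
    simpa [marginals, Ne.symm h] using hi
  obtain ⟨r, rfl⟩ := Multiset.exists_cons_of_mem hw
  refine ⟨(t, i₀, l) ::ₘ r, ?_, ?_⟩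
  · simp [Multiset.cons_swap i' i₀]
  · simp only [Multiset.map_cons, Multiset.prod_cons, ← mul_assoc, hx s t i' i₀]

theorem exists_marginals_cons_eq_of_mem_last
    (hx : ∀ s t i k j l, x (s, i, j) * x (t, k, l) = x (s, i, l) * x (t, k, j))
    {m : Multiset (ι × α × β)} {s : ι} {i : α} {j₀ j : β} (hv : (s, i, j₀) ∈ m)
    (hj : j ∈ (marginals m).2.2) :
    ∃ m₀, marginals ((s, i, j) ::ₘ m₀) = marginals m ∧
      (((s, i, j) ::ₘ m₀).map x).prod = (m.map x).prod := by
  obtain ⟨m₀, hmarg, hprod⟩ := exists_marginals_cons_eq_of_mem_mid (x ∘ Prod.map id Prod.swap)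
    (fun s t j l i k => hx s t i k j l) (Multiset.mem_map_of_mem (Prod.map id Prod.swap) hv)
    (by rwa [marginals_map_swap])
  refine ⟨m₀.map (Prod.map id Prod.swap), ?_, ?_⟩
  · have := congrArg (fun p => (p.1, p.2.2, p.2.1)) hmarg
    simpa [marginals_map_swap] using this
  · have hswap (v : ι × α × β) : Prod.map id Prod.swap (Prod.map id Prod.swap v) = v := rfl
    simpa [Multiset.map_map, Function.comp_def, hswap] using hprod

theorem prod_map_eq_of_marginals_eq
    (hmid : ∀ s t i k j l, x (s, i, j) * x (t, k, l) = x (s, k, j) * x (t, i, l))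
    (hlast : ∀ s t i k j l, x (s, i, j) * x (t, k, l) = x (s, i, l) * x (t, k, j))
    {m m' : Multiset (ι × α × β)} (h : marginals m = marginals m') :
    (m.map x).prod = (m'.map x).prod := by
  induction m' using Multiset.induction generalizing m with
  | empty =>
    have : m.map Prod.fst = 0 := congrArg Prod.fst h
    simp_all
  | cons v m' ih =>
    obtain ⟨s, i, j⟩ := v
    obtain ⟨hs, hi, hj⟩ : s ∈ (marginals m).1 ∧ i ∈ (marginals m).2.1 ∧ j ∈ (marginals m).2.2 := by
      simp [h]
    obtain ⟨⟨s, i₀, j₀⟩, hv, rfl⟩ : ∃ w ∈ m, w.1 = s := by simpa [marginals] using hs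
    obtain ⟨m₁, hmarg₁, hprod₁⟩ := exists_marginals_cons_eq_of_mem_mid x hmid hv hi
    obtain ⟨m₀, hmarg₀, hprod₀⟩ := exists_marginals_cons_eq_of_mem_last x hlast
      (Multiset.mem_cons_self _ _) (hmarg₁ ▸ hj)
    rw [← hprod₁, ← hprod₀, Multiset.map_cons, Multiset.prod_cons, Multiset.map_cons,
      Multiset.prod_cons, ih ?_]
    simpa [Prod.ext_iff] using hmarg₀.trans (hmarg₁.trans h)

end Marginals

section Segre

variable {ι α β : Type*}

def segreDegree (m : Multiset (ι × α × β)) : Multiset (ι ⊕ α ⊕ β) :=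
  (marginals m).1.disjSum ((marginals m).2.1.disjSum (marginals m).2.2)

theorem segreDegree_inj {m m' : Multiset (ι × α × β)} :
    segreDegree m = segreDegree m' ↔ marginals m = marginals m' := by
  simp [segreDegree, Multiset.disjSum_inj, Prod.ext_iff]

variable (R : Type*) [CommRing R]

noncomputable def segreMonomial (p : ι × α × β) : MvPolynomial (ι ⊕ α ⊕ β) R :=
  X (Sum.inl p.1) * X (Sum.inr (Sum.inl p.2.1)) * X (Sum.inr (Sum.inr p.2.2))

theorem prod_map_segreMonomial (m : Multiset (ι × α × β)) :
    (m.map (segreMonomial R)).prod = ((segreDegree m).map X).prod := by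
  simp only [segreDegree, marginals, Multiset.disjSum, Multiset.map_add, Multiset.prod_add,
    Multiset.map_map, ← mul_assoc, ← Multiset.prod_map_mul]
  rfl

theorem aeval_segreMonomial_monomial [DecidableEq ι] [DecidableEq α] [DecidableEq β]
    (d : ι × α × β →₀ ℕ) :
    aeval (segreMonomial R) (monomial d (1 : R)) =
      monomial (Multiset.toFinsupp (segreDegree d.toMultiset)) 1 := by
  rw [← prod_map_X_eq_monomial, ← prod_map_segreMonomial, monomial_one_eq_prod_map_X d,
    map_multiset_prod, Multiset.map_map]
  simp [Function.comp_def]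

end Segre

section Minors

variable {K : Type*} [CommRing K] {a b : ℕ}

theorem span_minors_le_ker_aeval_segreMonomial :
    Ideal.span (minors2 K a b ∪ minors3 K a b) ≤ RingHom.ker (aeval (segreMonomial K)) := by
  rw [Ideal.span_le]
  rintro _ (⟨i₁, i₂, c₁, c₂, rfl⟩ | ⟨j₁, j₂, c₁, c₂, rfl⟩) <;>
  · simp only [SetLike.mem_coe, RingHom.mem_ker, map_sub, map_mul, aeval_X, segreMonomial]
    ring

theorem prod_map_X_sub_mem_span_minors {m m' : Multiset (Fin 2 × Fin a × Fin b)}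
    (h : marginals m = marginals m') :
    (m.map X).prod - (m'.map X).prod ∈ Ideal.span (minors2 K a b ∪ minors3 K a b) := by
  rw [← Ideal.Quotient.eq, map_multiset_prod, map_multiset_prod, Multiset.map_map,
    Multiset.map_map]
  refine prod_map_eq_of_marginals_eq _ (fun s t i k j l => ?_) (fun s t i k j l => ?_) h <;>
    simp only [Function.comp_apply, ← map_mul, Ideal.Quotient.eq]
  · exact Ideal.subset_span (Or.inl ⟨i, k, (s, j), (t, l), by ring⟩)
  · exact Ideal.subset_span (Or.inr ⟨j, l, (s, i), (t, k), by ring⟩)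

end Minors

theorem stmt_13_general (K : Type*) [Field K] (a b : ℕ) :
    Ideal.span (minors2 K a b ∪ minors3 K a b) =
      RingHom.ker (MvPolynomial.aeval
        (fun p : Fin 2 × Fin a × Fin b =>
          (X (Sum.inl p.1) * X (Sum.inr (Sum.inl p.2.1)) * X (Sum.inr (Sum.inr p.2.2)) :
            MvPolynomial (Fin 2 ⊕ Fin a ⊕ Fin b) K)) :
        MvPolynomial (Fin 2 × Fin a × Fin b) K →ₐ[K] _) := by
  classical
  refine le_antisymm span_minors_le_ker_aeval_segreMonomial <|
    ker_le_of_monomial_sub_monomial_mem _ _ (aeval_segreMonomial_monomial K) _ fun d d' h => ?_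
  rw [monomial_one_eq_prod_map_X, monomial_one_eq_prod_map_X]
  exact prod_map_X_sub_mem_span_minors (segreDegree_inj.1 (Multiset.toFinsupp.injective h))

/-- The ideal generated by the `2`-minors of the second and third unfoldings
equals the toric (Hibi) ideal of the Segre embedding of
`ℙ¹ × ℙ^{a-1} × ℙ^{b-1}`, i.e. the kernel of the monomial map
`x_{sij} ↦ u_s v_i w_j`. -/
theorem stmt_13 (K : Type*) [Field K] (a b : ℕ) (ha : 2 ≤ a) (hab : a ≤ b) :
    Ideal.span (minors2 K a b ∪ minors3 K a b) =
      RingHom.ker (MvPolynomial.aeval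
        (fun p : Fin 2 × Fin a × Fin b =>
          (X (Sum.inl p.1) * X (Sum.inr (Sum.inl p.2.1)) * X (Sum.inr (Sum.inr p.2.2)) :
            MvPolynomial (Fin 2 ⊕ Fin a ⊕ Fin b) K)) :
        MvPolynomial (Fin 2 × Fin a × Fin b) K →ₐ[K] _) :=
  stmt_13_general K a b
end

section
/- Let P = [a] × [2b] with the described partial order and 1 ≤ t ≤ a-1. The simplicial complex Δ whose faces are the subsets of P containing no (t+1)-element chain is pure of dimension (a+b)t − 1: every facet has exactly (a+b)t elements. -/
/-!
Reading `y - x` modulo `a + b` cuts `P` into `a + b` "diagonals" `(x, y), (x + 1, y + 1), …`,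
where a diagonal reaching column `a` continues in column `1`, `b + 1` rows higher; each diagonal is a chain with at least `a > t` points. So a facet
`S` meets each diagonal in at most `t` points, and it suffices to show that it meets each one in at
least `t` points.

Pick a point `q` of a diagonal outside `S`. By maximality `S ∪ {q}` contains a `(t+1)`-chain through
`q`, so `h⁻(q) + h⁺(q) ≥ t`, where `h⁻(q)` (`h⁺(q)`) is the largest size of a chain of `S` below
(above) `q`. Walking down the diagonal, one step `p → q` raises `h⁻` by at most `[p ∈ S]`: a chain
below `q` has at most one element not below `p`, and such an element lies under everything above
`p`, so if `p ∉ S` the chain could be continued above `p` into a chain of `S` that is too long. Hence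
`h⁻(q)` is at most the number of points of `S` below `q` on the diagonal, dually for `h⁺(q)`.
-/

open Finset Function

section Height

variable {α : Type*} (r : α → α → Prop)

def ChainBounded (t : ℕ) (S : Finset α) : Prop :=
  ∀ c ⊆ S, IsChain r (c : Set α) → c.card ≤ t

open Classical in
noncomputable def heightBelow (S : Finset α) (q : α) : ℕ :=
  ((S.filter (r · q)).powerset.filter fun c : Finset α => IsChain r (c : Set α)).sup card

/-- Every element of `S` below `q` but not weakly below `p` lies above all elements of `S` below
it (which are then below `p`) and below all elements of `S` above `p`. -/
structure IsFringeStep (S : Finset α) (p q : α) : Prop where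
  rel : r p q
  rel_of_rel_fringe : ∀ u ∈ S, ∀ v ∈ S, r v q → ¬ r v p → v ≠ p → r u v → r u p
  fringe_rel_of_rel : ∀ u ∈ S, ∀ w ∈ S, r u q → ¬ r u p → u ≠ p → r p w → r u w

variable {r} {t : ℕ} {S : Finset α} {p q : α}

lemma ChainBounded.swap (hS : ChainBounded r t S) : ChainBounded (swap r) t S :=
  fun c hc hch => hS c hc hch.symm

lemma card_le_heightBelow {c : Finset α} (hcS : c ⊆ S) (hc : IsChain r (c : Set α))
    (hcq : ∀ u ∈ c, r u q) : c.card ≤ heightBelow r S q := by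
  classical
  refine le_sup (f := card) (mem_filter.2 ⟨mem_powerset.2 fun u hu => ?_, hc⟩)
  exact mem_filter.2 ⟨hcS hu, hcq u hu⟩

lemma exists_isChain_card_eq_heightBelow (S : Finset α) (q : α) :
    ∃ c ⊆ S, IsChain r (c : Set α) ∧ (∀ u ∈ c, r u q) ∧ c.card = heightBelow r S q := by
  classical
  obtain ⟨c, hc, hcard⟩ := exists_mem_eq_sup
    ((S.filter (r · q)).powerset.filter fun c : Finset α => IsChain r (c : Set α))
    ⟨∅, by simp⟩ card
  obtain ⟨hcS, hch⟩ := mem_filter.1 hc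
  have hcS' := mem_powerset.1 hcS
  exact ⟨c, hcS'.trans (filter_subset _ _), hch, fun u hu => (mem_filter.1 (hcS' hu)).2,
    by rw [heightBelow, hcard]⟩

lemma heightBelow_eq_zero (h : ∀ u ∈ S, ¬ r u q) : heightBelow r S q = 0 := by
  obtain ⟨c, hcS, -, hcq, hcard⟩ := exists_isChain_card_eq_heightBelow (r := r) S q
  rw [← hcard, card_eq_zero, eq_empty_iff_forall_notMem]
  exact fun u hu => h u (hcS hu) (hcq u hu)

lemma IsChain.union_of_forall_rel {c d : Set α} (hc : IsChain r c) (hd : IsChain r d)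
    (hcd : ∀ u ∈ c, ∀ v ∈ d, r u v) : IsChain r (c ∪ d) :=
  isChain_union.2 ⟨hc, hd, fun u hu v hv _ => .inl (hcd u hu v hv)⟩

variable [IsStrictOrder α r]

lemma le_heightBelow_add_heightBelow_swap [DecidableEq α] (hS : ChainBounded r t S)
    (hq : ¬ ChainBounded r t (insert q S)) :
    t ≤ heightBelow r S q + heightBelow (swap r) S q := by
  classical
  simp only [ChainBounded, not_forall, not_le] at hq
  obtain ⟨c, hcS, hc, hct⟩ := hq
  have hqc : q ∈ c := by
    by_contra hqc
    exact (hS c (fun u hu => (mem_insert.1 (hcS hu)).resolve_left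
      (ne_of_mem_of_not_mem hu hqc)) hc).not_gt hct
  have hsubS : ∀ s ⊆ c, q ∉ s → s ⊆ S := fun s hs hq u hu =>
    (mem_insert.1 (hcS (hs hu))).resolve_left (ne_of_mem_of_not_mem hu hq)
  have hsplit : c.erase q ⊆ c.filter (r · q) ∪ c.filter (swap r · q) := by
    intro u hu
    obtain ⟨hne, huc⟩ := mem_erase.1 hu
    rcases hc huc hqc hne with h | h
    · exact mem_union_left _ (mem_filter.2 ⟨huc, h⟩)
    · exact mem_union_right _ (mem_filter.2 ⟨huc, h⟩)
  have hbelow : (c.filter (r · q)).card ≤ heightBelow r S q :=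
    card_le_heightBelow (hsubS _ (filter_subset _ c) fun h => irrefl_of r q (mem_filter.1 h).2)
      (hc.mono (coe_subset.2 (filter_subset _ c))) fun u hu => (mem_filter.1 hu).2
  have habove : (c.filter (swap r · q)).card ≤ heightBelow (swap r) S q :=
    card_le_heightBelow (hsubS _ (filter_subset _ c) fun h => irrefl_of r q (mem_filter.1 h).2)
      (hc.mono (coe_subset.2 (filter_subset _ c))).symm fun u hu => (mem_filter.1 hu).2
  have := (card_le_card hsplit).trans (card_union_le _ _)
  rw [card_erase_of_mem hqc] at this
  omega

lemma IsFringeStep.rel_of_mem_chain (hpq : IsFringeStep r S p q) {c : Finset α} (hcS : c ⊆ S)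
    (hc : IsChain r (c : Set α)) (hcq : ∀ v ∈ c, r v q) {u v : α} (hu : u ∈ c) (hup : ¬ r u p)
    (hne : u ≠ p) (hv : v ∈ c) (hvu : v ≠ u) : r v u ∧ r v p := by
  have hvu' : r v u := by
    refine (hc hv hu hvu).resolve_right fun huv => hup ?_
    by_cases hvp : r v p
    · exact trans_of r huv hvp
    · rcases eq_or_ne v p with rfl | hvp'
      · exact huv
      · exact hpq.rel_of_rel_fringe u (hcS hu) v (hcS hv) (hcq v hv) hvp hvp' huv
  exact ⟨hvu', hpq.rel_of_rel_fringe v (hcS hv) u (hcS hu) (hcq u hu) hup hne hvu'⟩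

lemma heightBelow_le_of_isFringeStep [DecidableEq α] (hS : ChainBounded r t S)
    (hpq : IsFringeStep r S p q)
    (hp : p ∉ S → t ≤ heightBelow r S p + heightBelow (swap r) S p) :
    heightBelow r S q ≤ heightBelow r S p + if p ∈ S then 1 else 0 := by
  obtain ⟨c, hcS, hc, hcq, hcard⟩ := exists_isChain_card_eq_heightBelow (r := r) S q
  rw [← hcard]
  have hbelow : ∀ s ⊆ c, (∀ v ∈ s, r v p) → s.card ≤ heightBelow r S p := fun s hs hsp =>
    card_le_heightBelow (hs.trans hcS) (hc.mono (coe_subset.2 hs)) hsp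
  by_cases hfringe : ∃ u ∈ c, ¬ r u p ∧ u ≠ p
  · obtain ⟨u, huc, hup, hne⟩ := hfringe
    have hrest : ∀ v ∈ c.erase u, r v u ∧ r v p := fun v hv =>
      hpq.rel_of_mem_chain hcS hc hcq huc hup hne (mem_of_mem_erase hv) (ne_of_mem_erase hv)
    have hcp := hbelow _ (erase_subset u c) fun v hv => (hrest v hv).2
    rw [card_erase_of_mem huc] at hcp
    split_ifs with hpS
    · omega
    obtain ⟨d, hdS, hd, hpd, hdcard⟩ := exists_isChain_card_eq_heightBelow (r := swap r) S p
    have hud : ∀ w ∈ d, r u w := fun w hw =>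
      hpq.fringe_rel_of_rel u (hcS huc) w (hdS hw) (hcq u huc) hup hne (hpd w hw)
    have hcd : ∀ v ∈ c, ∀ w ∈ d, r v w := by
      intro v hv w hw
      rcases eq_or_ne v u with rfl | hvu
      · exact hud w hw
      · exact trans_of r (hrest v (mem_erase.2 ⟨hvu, hv⟩)).1 (hud w hw)
    have hcdchain := hS _ (union_subset hcS hdS) (by
      rw [coe_union]; exact hc.union_of_forall_rel hd.symm hcd)
    rw [card_union_of_disjoint (disjoint_left.2 fun v hvc hvd =>
      irrefl_of r v (hcd v hvc v hvd))] at hcdchain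
    have := hp hpS
    omega
  · push Not at hfringe
    have hcp := hbelow _ (erase_subset p c) fun v hv =>
      by_contra fun h => ne_of_mem_erase hv (hfringe v (mem_of_mem_erase hv) h)
    split_ifs with hpS
    · have := pred_card_le_card_erase (s := c) (a := p)
      omega
    · rwa [erase_eq_of_notMem fun h => hpS (hcS h)] at hcp

lemma card_filter_rel_add_le [DecidableEq α] (C : α → Prop) [DecidablePred C] [DecidableRel r]
    (hp : C p) (hpq : r p q) :
    (S.filter fun u => C u ∧ r u p).card + (if p ∈ S then 1 else 0) ≤
      (S.filter fun u => C u ∧ r u q).card := by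
  have hsub : S.filter (fun u => C u ∧ r u p) ⊆ S.filter fun u => C u ∧ r u q :=
    monotone_filter_right _ fun _ _ hu => ⟨hu.1, trans_of r hu.2 hpq⟩
  split_ifs with hpS
  · rw [← card_insert_of_notMem fun h => irrefl_of r p (mem_filter.1 h).2.2]
    exact card_le_card (insert_subset (mem_filter.2 ⟨hpS, hp, hpq⟩) hsub)
  · exact card_le_card hsub

lemma heightBelow_le_card_of_descent [DecidableEq α] (hS : ChainBounded r t S) (C : α → Prop)
    [DecidablePred C] [DecidableRel r] (μ : α → ℕ)
    (hmax : ∀ p, C p → p ∉ S → t ≤ heightBelow r S p + heightBelow (swap r) S p)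
    (hdesc : ∀ q, C q → (∀ u ∈ S, ¬ r u q) ∨ ∃ p, C p ∧ μ p < μ q ∧ IsFringeStep r S p q)
    (hq : C q) : heightBelow r S q ≤ (S.filter fun u => C u ∧ r u q).card := by
  induction hμ : μ q using Nat.strong_induction_on generalizing q with
  | _ n ih =>
  rcases hdesc q hq with hmin | ⟨p, hp, hpq, hstep⟩
  · simp [heightBelow_eq_zero hmin]
  calc heightBelow r S q ≤ heightBelow r S p + if p ∈ S then 1 else 0 :=
        heightBelow_le_of_isFringeStep hS hstep (hmax p hp)
    _ ≤ (S.filter fun u => C u ∧ r u p).card + if p ∈ S then 1 else 0 := by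
        gcongr; exact ih _ (hμ ▸ hpq) hp rfl
    _ ≤ (S.filter fun u => C u ∧ r u q).card := card_filter_rel_add_le C hp hstep.rel

end Height

/-- The strict part of `ple b` on `P`; unlike `ple b`, it is a strict order on all of `ℤ × ℤ`. -/
def plt (b : ℕ) (p q : ℤ × ℤ) : Prop :=
  p.2 < q.2 ∧ (p.1 < q.1 ∨ p.2 + b < q.2)

instance (b : ℕ) : IsStrictOrder (ℤ × ℤ) (plt b) where
  irrefl p := by unfold plt; omega
  trans p q r := by unfold plt; omega

/-- `(y - x) mod (a + b)`, written out using that `y - x ∈ (-(a + b), 2 (a + b))` on `P`. -/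
def diagIndex (a b : ℕ) (q : ℤ × ℤ) : ℤ :=
  if q.2 - q.1 < 0 then q.2 - q.1 + (a + b)
  else if q.2 - q.1 < a + b then q.2 - q.1 else q.2 - q.1 - (a + b)

def DiagStep (a b : ℕ) (p q : ℤ × ℤ) : Prop :=
  (q.1 = p.1 + 1 ∧ q.2 = p.2 + 1) ∨ (p.1 = a ∧ q.1 = 1 ∧ q.2 = p.2 + b + 1)

section Diagonals

variable {a b : ℕ} {S : Finset (ℤ × ℤ)} {p q : ℤ × ℤ}

lemma ple_iff_plt (hp : memP a b p) (hq : memP a b q) (hne : p ≠ q) :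
    ple b p q ↔ plt b p q := by
  unfold memP at hp hq
  unfold ple plt
  simp only [hne, false_or]
  omega

lemma isChain_ple_iff {c : Set (ℤ × ℤ)} (hc : ∀ p ∈ c, memP a b p) :
    IsChain (ple b) c ↔ IsChain (plt b) c := by
  refine forall₂_congr fun p hp => forall₂_congr fun q hq => forall_congr' fun hne => ?_
  dsimp only
  rw [ple_iff_plt (hc p hp) (hc q hq) hne, ple_iff_plt (hc q hq) (hc p hp) hne.symm]

lemma chainBounded_plt_iff {t : ℕ} (hS : ∀ p ∈ S, memP a b p) :
    ChainBounded (plt b) t S ↔ ∀ c ⊆ S, IsChain (ple b) (c : Set (ℤ × ℤ)) → c.card ≤ t :=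
  forall₂_congr fun c hc => by rw [isChain_ple_iff fun p hp => hS p (hc hp)]

lemma diagIndex_mem_Ico (hq : memP a b q) : diagIndex a b q ∈ Ico 0 (a + b : ℤ) := by
  unfold memP at hq
  rw [mem_Ico]
  unfold diagIndex
  split_ifs <;> omega

lemma plt_or_plt_of_diagIndex_eq {u v : ℤ × ℤ} (hu : memP a b u) (hv : memP a b v)
    (huv : diagIndex a b u = diagIndex a b v) (hne : u ≠ v) : plt b u v ∨ plt b v u := by
  rw [Ne, Prod.ext_iff] at hne
  unfold memP at hu hv
  unfold diagIndex at huv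
  unfold plt
  split_ifs at huv <;> omega

lemma DiagStep.diagIndex_eq (hp : memP a b p) (hq : memP a b q) (h : DiagStep a b p q) :
    diagIndex a b p = diagIndex a b q := by
  unfold memP at hp hq
  unfold DiagStep at h
  unfold diagIndex
  split_ifs <;> omega

lemma DiagStep.isFringeStep (hS : ∀ u ∈ S, memP a b u) (h : DiagStep a b p q) :
    IsFringeStep (plt b) S p q := by
  unfold DiagStep at h
  refine ⟨by unfold plt; omega, fun u hu v hv => ?_, fun u hu w hw => ?_⟩ <;>
  · have := hS u hu
    have := hS _ ‹_ ∈ S›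
    unfold memP plt at *
    rw [Ne, Prod.ext_iff]
    omega

lemma DiagStep.isFringeStep_swap (hS : ∀ u ∈ S, memP a b u) (h : DiagStep a b p q) :
    IsFringeStep (swap (plt b)) S q p := by
  unfold DiagStep at h
  refine ⟨by unfold swap plt; omega, fun u hu v hv => ?_, fun u hu w hw => ?_⟩ <;>
  · have := hS u hu
    have := hS _ ‹_ ∈ S›
    unfold memP swap plt at *
    rw [Ne, Prod.ext_iff]
    omega

lemma exists_diagStep_to (hq : memP a b q) :
    (∀ u, memP a b u → ¬ plt b u q) ∨ ∃ p, memP a b p ∧ p.2 < q.2 ∧ DiagStep a b p q := by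
  unfold memP at hq
  by_cases hstart : (q.1 = 1 ∧ q.2 ≤ b + 1) ∨ q.2 = 1
  · left; intro u hu; unfold memP plt at *; omega
  right
  by_cases hq1 : q.1 = 1
  · exact ⟨(a, q.2 - b - 1), by unfold memP; omega, by omega, by unfold DiagStep; omega⟩
  · exact ⟨(q.1 - 1, q.2 - 1), by unfold memP; omega, by omega, by unfold DiagStep; omega⟩

lemma exists_diagStep_from (hq : memP a b q) :
    (∀ u, memP a b u → ¬ plt b q u) ∨ ∃ r, memP a b r ∧ q.2 < r.2 ∧ DiagStep a b q r := by
  unfold memP at hq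
  by_cases htop : (q.1 = a ∧ b ≤ q.2) ∨ q.2 = 2 * b
  · left; intro u hu; unfold memP plt at *; omega
  right
  by_cases hqa : q.1 = a
  · exact ⟨(1, q.2 + b + 1), by unfold memP; omega, by omega, by unfold DiagStep; omega⟩
  · exact ⟨(q.1 + 1, q.2 + 1), by unfold memP; omega, by omega, by unfold DiagStep; omega⟩

lemma exists_memP_diagIndex_eq_notMem (hab : a ≤ b) {j : ℤ} (hj0 : 0 ≤ j) (hj : j < a + b)
    (hS : (S.filter (diagIndex a b · = j)).card < a) :
    ∃ q, memP a b q ∧ diagIndex a b q = j ∧ q ∉ S := by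
  let f : ℕ → ℤ × ℤ := fun i => (i + 1, if j + i < a + b then j + i + 1 else j + i + 1 - (a + b))
  have hf : ∀ i < a, memP a b (f i) ∧ diagIndex a b (f i) = j := by
    intro i hi
    unfold memP diagIndex
    simp only [f]
    split_ifs <;> omega
  by_contra! hall
  have himage : (range a).image f ⊆ S.filter (diagIndex a b · = j) := by
    simp only [subset_iff, mem_image, mem_range, mem_filter]
    rintro _ ⟨i, hi, rfl⟩
    exact ⟨hall _ (hf i hi).1 (hf i hi).2, (hf i hi).2⟩
  have hinj : Set.InjOn f (range a) := fun i _ i' _ h => by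
    have := congrArg Prod.fst h
    simp only [f] at this
    omega
  have := card_le_card himage
  rw [card_image_of_injOn hinj, card_range] at this
  omega

end Diagonals

section Facets

variable {a b t : ℕ} {S : Finset (ℤ × ℤ)}

open Classical in
lemma heightBelow_le_card_diagonal (hS : ∀ u ∈ S, memP a b u) (hbdd : ChainBounded (plt b) t S)
    (hmax : ∀ p, memP a b p → p ∉ S → ¬ ChainBounded (plt b) t (insert p S))
    {q : ℤ × ℤ} {j : ℤ} (hq : memP a b q) (hqj : diagIndex a b q = j) :
    heightBelow (plt b) S q ≤
      (S.filter fun u => (memP a b u ∧ diagIndex a b u = j) ∧ plt b u q).card := by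
  refine heightBelow_le_card_of_descent hbdd _ (fun u => u.2.toNat)
    (fun p hp hpS => le_heightBelow_add_heightBelow_swap hbdd (hmax p hp.1 hpS))
    (fun q' hq' => ?_) ⟨hq, hqj⟩
  refine (exists_diagStep_to hq'.1).imp (fun h u hu => h u (hS u hu)) ?_
  rintro ⟨p, hp, hlt, hstep⟩
  exact ⟨p, ⟨hp, (hstep.diagIndex_eq hp hq'.1).trans hq'.2⟩, by have := hp.2.2.1; omega,
    hstep.isFringeStep hS⟩

open Classical in
lemma heightBelow_swap_le_card_diagonal (hS : ∀ u ∈ S, memP a b u)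
    (hbdd : ChainBounded (plt b) t S)
    (hmax : ∀ p, memP a b p → p ∉ S → ¬ ChainBounded (plt b) t (insert p S))
    {q : ℤ × ℤ} {j : ℤ} (hq : memP a b q) (hqj : diagIndex a b q = j) :
    heightBelow (swap (plt b)) S q ≤
      (S.filter fun u => (memP a b u ∧ diagIndex a b u = j) ∧ plt b q u).card := by
  refine heightBelow_le_card_of_descent hbdd.swap _ (fun u => (2 * b - u.2).toNat)
    (fun p hp hpS => (add_comm _ _).trans_ge
      (le_heightBelow_add_heightBelow_swap hbdd (hmax p hp.1 hpS)))
    (fun q' hq' => ?_) ⟨hq, hqj⟩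
  refine (exists_diagStep_from hq'.1).imp (fun h u hu => h u (hS u hu)) ?_
  rintro ⟨r, hr, hlt, hstep⟩
  exact ⟨r, ⟨hr, (hstep.diagIndex_eq hq'.1 hr).symm.trans hq'.2⟩,
    by have := hr.2.2.2; omega, hstep.isFringeStep_swap hS⟩

lemma card_filter_diagIndex_eq (hta : t < a) (hab : a ≤ b) (hS : ∀ u ∈ S, memP a b u)
    (hbdd : ChainBounded (plt b) t S)
    (hmax : ∀ p, memP a b p → p ∉ S → ¬ ChainBounded (plt b) t (insert p S))
    {j : ℤ} (hj0 : 0 ≤ j) (hj : j < a + b) :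
    (S.filter (diagIndex a b · = j)).card = t := by
  classical
  have hchain : IsChain (plt b) ((S.filter (diagIndex a b · = j) : Finset _) : Set (ℤ × ℤ)) := by
    intro u hu v hv hne
    simp only [coe_filter, Set.mem_ofPred_eq] at hu hv
    exact plt_or_plt_of_diagIndex_eq (hS u hu.1) (hS v hv.1) (hu.2.trans hv.2.symm) hne
  have hle := hbdd _ (filter_subset _ _) hchain
  obtain ⟨q, hq, hqj, hqS⟩ := exists_memP_diagIndex_eq_notMem (S := S) hab hj0 hj (by omega)
  have hbelow := heightBelow_le_card_diagonal hS hbdd hmax hq hqj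
  have habove := heightBelow_swap_le_card_diagonal hS hbdd hmax hq hqj
  have hsub : ∀ (R : ℤ × ℤ → Prop) [DecidablePred R],
      (S.filter fun u => (memP a b u ∧ diagIndex a b u = j) ∧ R u) ⊆
        S.filter (diagIndex a b · = j) :=
    fun R _ => monotone_filter_right S fun _ _ h => h.1.2
  have hcard := card_le_card (union_subset (hsub (plt b · q)) (hsub (plt b q ·)))
  rw [card_union_of_disjoint (disjoint_filter.2 fun _ _ h h' => asymm_of (plt b) h.2 h'.2)]
    at hcard
  have := le_heightBelow_add_heightBelow_swap hbdd (hmax q hq hqS)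
  omega

end Facets

theorem stmt_15_general (a b t : ℕ) (ha : 2 ≤ a) (hab : a ≤ b) (hta : t ≤ a - 1)
    (S : Finset (ℤ × ℤ)) (hS : ∀ p ∈ S, memP a b p)
    (hface : ∀ c : Finset (ℤ × ℤ), c ⊆ S → IsChain (ple b) (c : Set (ℤ × ℤ)) → c.card ≤ t)
    (hmax : ∀ S' : Finset (ℤ × ℤ), (∀ p ∈ S', memP a b p) →
      (∀ c : Finset (ℤ × ℤ), c ⊆ S' → IsChain (ple b) (c : Set (ℤ × ℤ)) → c.card ≤ t) →
      S ⊆ S' → S = S') :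
    S.card = (a + b) * t := by
  have hbdd : ChainBounded (plt b) t S := (chainBounded_plt_iff hS).2 hface
  have hmax' : ∀ q, memP a b q → q ∉ S → ¬ ChainBounded (plt b) t (insert q S) := by
    intro q hq hqS hins
    have hmem : ∀ p ∈ insert q S, memP a b p := forall_mem_insert _ _ _ |>.2 ⟨hq, hS⟩
    exact hqS (hmax _ hmem ((chainBounded_plt_iff hmem).1 hins) (subset_insert q S) ▸
      mem_insert_self q S)
  rw [card_eq_sum_card_fiberwise fun u hu => diagIndex_mem_Ico (hS u hu),
    sum_congr rfl fun j hj => card_filter_diagIndex_eq (by omega) hab hS hbdd hmax'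
      (mem_Ico.1 hj).1 (mem_Ico.1 hj).2, sum_const, Int.card_Ico, sub_zero, smul_eq_mul]
  norm_cast

theorem stmt_15 (a b t : ℕ) (ha : 2 ≤ a) (hab : a ≤ b) (ht1 : 1 ≤ t) (hta : t ≤ a - 1)
    (S : Finset (ℤ × ℤ)) (hS : ∀ p ∈ S, memP a b p)
    (hface : ∀ c : Finset (ℤ × ℤ), c ⊆ S → IsChain (ple b) (c : Set (ℤ × ℤ)) → c.card ≤ t)
    (hmax : ∀ S' : Finset (ℤ × ℤ), (∀ p ∈ S', memP a b p) →
      (∀ c : Finset (ℤ × ℤ), c ⊆ S' → IsChain (ple b) (c : Set (ℤ × ℤ)) → c.card ≤ t) →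
      S ⊆ S' → S = S') :
    S.card = (a + b) * t :=
  stmt_15_general a b t ha hab hta S hS hface hmax
end
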